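/- arXiv:1311.1868 — 5 statements merged into one kernel-verified Lean document; each statement's English description precedes it below -/
import Mathlib

section
/- In the group W of bijections w : ℤ → ℤ satisfying w(i+r) = w(i)+r, the subgroup generated by the elements s₁,...,s_r (where s_i(j) = j if j ≢ i, i+1 mod r; s_i(j) = j−1 if j ≡ i+1 mod r; s_i(j) = j+1 if j ≡ i mod r) together with the shift ρ (ρ(j) = j+1) equals all of W. -/
/-!
Every generator commutes with translation by `r`, so the closure lies in the periodic group.
Conversely, for periodic `w` consider its inversions `(j, k)`, `j < k`, `w k < w j`; they are
invariant under the diagonal translation by `(r, r)`, and the classes are finite in number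
because `w` moves points by a bounded amount. If `w (i + 1) < w i`, then `(j, k) ↦ (s_i j, s_i k)`
maps the inversion classes of `w * s_i` injectively to those of `w` other than the class of
`(i, i + 1)`, so `w * s_i` has fewer; and `i` may be taken in `[1, r]` by periodicity.
A permutation without descents is increasing, hence a translation, i.e. a power of `ρ`.
-/

/-- `w : ℤ ≃ ℤ` commutes with translation by `r`. -/
def PeriodicPerm (r : ℕ) (w : ℤ ≃ ℤ) : Prop := ∀ i : ℤ, w (i + r) = w i + r

open Equiv Set

namespace PeriodicPerm

variable {r : ℕ} {w : Perm ℤ}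

theorem periodic_sub (hw : PeriodicPerm r w) : Function.Periodic (fun i => w i - i) r :=
  fun i => by
    show w (i + r) - (i + r) = w i - i
    rw [hw]; ring

theorem apply_add_mul (hw : PeriodicPerm r w) (i m : ℤ) : w (i + m * r) = w i + m * r := by
  have := hw.periodic_sub.int_mul m i
  simp only [Int.cast_id] at this
  linarith

theorem exists_abs_sub_le (hr : 0 < r) (hw : PeriodicPerm r w) : ∃ C, ∀ i, |w i - i| ≤ C := by
  obtain ⟨C, hC⟩ := ((finite_Ico 0 (r : ℤ)).image fun i => |w i - i|).bddAbove
  refine ⟨C, fun i => ?_⟩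
  obtain ⟨j, hj, hij⟩ := hw.periodic_sub.exists_mem_Ico₀ (by exact_mod_cast hr) i
  exact hC ⟨j, hj, by rw [hij]⟩

theorem exists_mem_Icc_apply_add_one_lt (hr : 0 < r) (hw : PeriodicPerm r w)
    (h : ¬ ∀ i, w i < w (i + 1)) : ∃ i ∈ Icc (1 : ℤ) r, w (i + 1) < w i := by
  have hdiff : Function.Periodic (fun i => w (i + 1) - w i) r := fun i => by
    show w (i + r + 1) - w (i + r) = w (i + 1) - w i
    rw [add_right_comm, hw, hw]; ring
  push Not at h
  obtain ⟨i, hi⟩ := h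
  obtain ⟨j, hj, hij⟩ := hdiff.exists_mem_Ico (by exact_mod_cast hr) i 1
  have hne : w (i + 1) ≠ w i := fun he => by simpa using w.injective he
  exact ⟨j, ⟨hj.1, by linarith [hj.2]⟩, by omega⟩

theorem eq_addRight (hw : PeriodicPerm 1 w) : w = Equiv.addRight (w 0) := by
  ext i
  have := hw.periodic_sub.int_mul i 0
  simp only [Nat.cast_one, mul_one, zero_add, sub_zero, Int.cast_id] at this
  simp only [coe_addRight]
  linarith

theorem of_strictMono (hw : StrictMono w) : PeriodicPerm 1 w := fun i => by
  have := (hw.orderIsoOfSurjective w w.surjective).map_succ i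
  simpa [Order.succ_eq_add_one] using this

end PeriodicPerm

theorem addRight_one_zpow (c : ℤ) : Equiv.addRight (1 : ℤ) ^ c = Equiv.addRight c := by
  ext i
  induction c using Int.induction_on generalizing i with
  | zero => simp
  | succ m ih =>
      rw [zpow_add_one, Perm.mul_apply, ih]
      simp only [coe_addRight]; ring
  | pred m ih =>
      rw [zpow_sub_one, Perm.mul_apply, ih]
      simp only [Perm.inv_def, addRight_symm, coe_addRight]; ring

def periodicSubgroup (r : ℕ) : Subgroup (Perm ℤ) := Subgroup.centralizer {Equiv.addRight (r : ℤ)}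

theorem mem_periodicSubgroup {r : ℕ} {w : Perm ℤ} : w ∈ periodicSubgroup r ↔ PeriodicPerm r w := by
  rw [periodicSubgroup, Subgroup.mem_centralizer_singleton_iff, Perm.ext_iff]
  simp [PeriodicPerm]

structure IsAffineSwap (r : ℕ) (i : ℤ) (t : Perm ℤ) : Prop where
  apply_of_modEq : ∀ j, j ≡ i [ZMOD r] → t j = j + 1
  apply_of_modEq_add_one : ∀ j, j ≡ i + 1 [ZMOD r] → t j = j - 1
  apply_of_not_modEq : ∀ j, ¬ j ≡ i [ZMOD r] → ¬ j ≡ i + 1 [ZMOD r] → t j = j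

namespace IsAffineSwap

variable {r : ℕ} {i : ℤ} {t : Perm ℤ}

theorem periodicPerm (ht : IsAffineSwap r i t) : PeriodicPerm r t := fun j => by
  have hj : j + r ≡ j [ZMOD r] := Int.add_modEq_right
  by_cases h₁ : j ≡ i [ZMOD r]
  · rw [ht.apply_of_modEq _ (hj.trans h₁), ht.apply_of_modEq _ h₁]; ring
  by_cases h₂ : j ≡ i + 1 [ZMOD r]
  · rw [ht.apply_of_modEq_add_one _ (hj.trans h₂), ht.apply_of_modEq_add_one _ h₂]; ring
  rw [ht.apply_of_not_modEq _ (fun h => h₁ (hj.symm.trans h)) (fun h => h₂ (hj.symm.trans h)),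
    ht.apply_of_not_modEq _ h₁ h₂]

theorem apply_self (ht : IsAffineSwap r i t) : t i = i + 1 :=
  ht.apply_of_modEq i rfl

theorem apply_add_one (ht : IsAffineSwap r i t) : t (i + 1) = i :=
  (ht.apply_of_modEq_add_one _ rfl).trans (add_sub_cancel_right i 1)

theorem apply_eq_or (ht : IsAffineSwap r i t) (j : ℤ) :
    (j ≡ i [ZMOD r] ∧ t j = j + 1) ∨ t j = j - 1 ∨ t j = j := by
  by_cases h₁ : j ≡ i [ZMOD r]
  · exact .inl ⟨h₁, ht.apply_of_modEq j h₁⟩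
  by_cases h₂ : j ≡ i + 1 [ZMOD r]
  · exact .inr (.inl (ht.apply_of_modEq_add_one j h₂))
  · exact .inr (.inr (ht.apply_of_not_modEq j h₁ h₂))

/-- `t` moves every point by at most one and is injective, so it can only reverse the order of
`j < k` when `t j = j + 1` and `t k = j`. -/
theorem apply_lt_apply (ht : IsAffineSwap r i t) {j k : ℤ} (hjk : j < k)
    (hne : j ≡ i [ZMOD r] → k ≠ j + 1) : t j < t k := by
  have hinj : t j ≠ t k := fun h => hjk.ne (t.injective h)
  rcases ht.apply_eq_or j with ⟨hj, htj⟩ | htj | htj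
  · have := hne hj
    rcases ht.apply_eq_or k with ⟨-, htk⟩ | htk | htk <;> omega
  all_goals rcases ht.apply_eq_or k with ⟨-, htk⟩ | htk | htk <;> omega

end IsAffineSwap

def diagShift (r : ℕ) (m : ℤ) : ℤ × ℤ := (m * r, m * r)

def inversions (w : Perm ℤ) : Set (ℤ × ℤ) := {p | p.1 < p.2 ∧ w p.2 < w p.1}

def windowInversions (r : ℕ) (w : Perm ℤ) : Set (ℤ × ℤ) :=
  {p ∈ inversions w | p.1 ∈ Ico 0 (r : ℤ)}

/-- The translate of `p` by a multiple of `(r, r)` whose first coordinate lies in `[0, r)`. -/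
def toWindow (r : ℕ) (p : ℤ × ℤ) : ℤ × ℤ := p + diagShift r (-(p.1 / r))

section ToWindow

variable {r : ℕ} {p q : ℤ × ℤ}

theorem toWindow_fst_mem (hr : 0 < r) (p : ℤ × ℤ) : (toWindow r p).1 ∈ Ico 0 (r : ℤ) := by
  have h : (toWindow r p).1 = p.1 % r := by
    simp only [toWindow, diagShift, Prod.fst_add, Int.emod_def]
    ring
  rw [h]
  exact ⟨Int.emod_nonneg _ (by omega), Int.emod_lt_of_pos _ (by omega)⟩

theorem toWindow_add_diagShift (hr : 0 < r) (p : ℤ × ℤ) (m : ℤ) :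
    toWindow r (p + diagShift r m) = toWindow r p := by
  have : (p.1 + m * r) / r = p.1 / r + m := Int.add_mul_ediv_right _ _ (by omega)
  ext <;> simp only [toWindow, diagShift, Prod.fst_add, Prod.snd_add, this] <;> ring

theorem toWindow_of_fst_mem (hp : p.1 ∈ Ico 0 (r : ℤ)) : toWindow r p = p := by
  simp [toWindow, diagShift, Int.ediv_eq_zero_of_lt hp.1 hp.2]

theorem exists_eq_add_diagShift_of_toWindow_eq (h : toWindow r p = toWindow r q) :
    ∃ m, p = q + diagShift r m := by
  refine ⟨p.1 / r - q.1 / r, ?_⟩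
  simp only [toWindow, diagShift, Prod.ext_iff, Prod.fst_add, Prod.snd_add] at h ⊢
  exact ⟨by linear_combination h.1, by linear_combination h.2⟩

end ToWindow

namespace PeriodicPerm

variable {r : ℕ} {w t : Perm ℤ} {i : ℤ}

theorem prodMap_add_diagShift (ht : PeriodicPerm r t) (p : ℤ × ℤ) (m : ℤ) :
    Prod.map t t (p + diagShift r m) = Prod.map t t p + diagShift r m := by
  ext <;> simp [diagShift, ht.apply_add_mul]

theorem add_diagShift_mem_inversions (hw : PeriodicPerm r w) {p : ℤ × ℤ} (m : ℤ) :
    p + diagShift r m ∈ inversions w ↔ p ∈ inversions w := by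
  simp [inversions, diagShift, hw.apply_add_mul]

theorem toWindow_mem_windowInversions (hr : 0 < r) (hw : PeriodicPerm r w) {p : ℤ × ℤ}
    (hp : p ∈ inversions w) : toWindow r p ∈ windowInversions r w :=
  ⟨(hw.add_diagShift_mem_inversions _).mpr hp, toWindow_fst_mem hr p⟩

theorem windowInversions_finite (hr : 0 < r) (hw : PeriodicPerm r w) :
    (windowInversions r w).Finite := by
  obtain ⟨C, hC⟩ := hw.exists_abs_sub_le hr
  refine ((finite_Ico 0 (r : ℤ)).prod (finite_Icc 0 (r + 2 * C))).subset ?_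
  rintro ⟨j, k⟩ ⟨⟨hjk, hinv⟩, hj⟩
  have := abs_le.mp (hC j)
  have := abs_le.mp (hC k)
  simp only [mem_prod, mem_Icc, mem_Ico] at hjk hinv hj ⊢
  omega

theorem injOn_toWindow_prodMap (hr : 0 < r) (ht : PeriodicPerm r t) :
    InjOn (toWindow r ∘ Prod.map t t) {p | p.1 ∈ Ico 0 (r : ℤ)} := by
  intro p hp q hq h
  obtain ⟨m, hm⟩ := exists_eq_add_diagShift_of_toWindow_eq h
  rw [← ht.prodMap_add_diagShift] at hm
  rw [← toWindow_of_fst_mem hp, ← toWindow_of_fst_mem hq,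
    Prod.map_injective.mpr ⟨t.injective, t.injective⟩ hm, toWindow_add_diagShift hr]


theorem toWindow_prodMap_mem_windowInversions (hr : 0 < r) (hw : PeriodicPerm r w)
    (ht : IsAffineSwap r i t) (hdes : w (i + 1) < w i) {p : ℤ × ℤ}
    (hp : p ∈ windowInversions r (w * t)) :
    toWindow r (Prod.map t t p) ∈ windowInversions r w \ {toWindow r (i, i + 1)} := by
  obtain ⟨⟨hlt, hinv⟩, -⟩ := hp
  have hne : p.1 ≡ i [ZMOD r] → p.2 ≠ p.1 + 1 := by
    rintro hmod hp2
    obtain ⟨m, hm⟩ := hmod.symm.dvd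
    have h₁ : w p.1 = w i + m * r := by rw [← hw.apply_add_mul]; congr 1; linarith
    have h₂ : w (p.1 + 1) = w (i + 1) + m * r := by rw [← hw.apply_add_mul]; congr 1; linarith
    rw [hp2, Perm.mul_apply, Perm.mul_apply, ht.apply_of_modEq _ hmod,
      ht.apply_of_modEq_add_one _ (hmod.add_right 1), add_sub_cancel_right] at hinv
    linarith
  refine ⟨hw.toWindow_mem_windowInversions hr ⟨ht.apply_lt_apply hlt hne, hinv⟩, fun h => ?_⟩
  obtain ⟨m, hm⟩ := exists_eq_add_diagShift_of_toWindow_eq h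
  have : Prod.map t t p = Prod.map t t ((i + 1, i) + diagShift r m) := by
    rw [hm, ht.periodicPerm.prodMap_add_diagShift, Prod.map_apply, ht.apply_self, ht.apply_add_one]
  have hp := Prod.map_injective.mpr ⟨t.injective, t.injective⟩ this
  simp only [hp, diagShift, Prod.fst_add, Prod.snd_add] at hlt
  linarith

theorem ncard_windowInversions_mul_lt (hr : 0 < r) (hw : PeriodicPerm r w)
    (ht : IsAffineSwap r i t) (hdes : w (i + 1) < w i) :
    (windowInversions r (w * t)).ncard < (windowInversions r w).ncard := by
  have hfin := hw.windowInversions_finite hr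
  have hi : toWindow r (i, i + 1) ∈ windowInversions r w :=
    hw.toWindow_mem_windowInversions hr ⟨lt_add_one i, hdes⟩
  calc (windowInversions r (w * t)).ncard
      ≤ (windowInversions r w \ {toWindow r (i, i + 1)}).ncard :=
        ncard_le_ncard_of_injOn _
          (fun _ hp => hw.toWindow_prodMap_mem_windowInversions hr ht hdes hp)
          ((ht.periodicPerm.injOn_toWindow_prodMap hr).mono fun _ hp => hp.2) hfin.sdiff
    _ < (windowInversions r w).ncard := ncard_sdiff_singleton_lt_of_mem hi hfin

end PeriodicPerm

theorem closure_le_periodicSubgroup {r : ℕ} {S : Set (Perm ℤ)} (hS : ∀ g ∈ S, PeriodicPerm r g) :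
    Subgroup.closure S ≤ periodicSubgroup r :=
  (Subgroup.closure_le _).mpr fun g hg => mem_periodicSubgroup.mpr (hS g hg)

theorem periodicSubgroup_le {r : ℕ} (hr : 0 < r) {H : Subgroup (Perm ℤ)}
    (hρ : Equiv.addRight 1 ∈ H) (hs : ∀ i ∈ Icc (1 : ℤ) r, ∃ t ∈ H, IsAffineSwap r i t) :
    periodicSubgroup r ≤ H := by
  intro w hw
  induction hn : (windowInversions r w).ncard using Nat.strong_induction_on generalizing w with
  | _ n ih =>
  have hw' := mem_periodicSubgroup.mp hw
  by_cases hmono : ∀ i, w i < w (i + 1)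
  · have hw₁ : PeriodicPerm 1 w := .of_strictMono (strictMono_int_of_lt_succ hmono)
    rw [hw₁.eq_addRight, ← addRight_one_zpow]
    exact zpow_mem hρ _
  obtain ⟨i, hi, hdes⟩ := hw'.exists_mem_Icc_apply_add_one_lt hr hmono
  obtain ⟨t, htH, ht⟩ := hs i hi
  have hwt : w * t ∈ periodicSubgroup r :=
    mul_mem hw (mem_periodicSubgroup.mpr ht.periodicPerm)
  have := ih _ (hn ▸ hw'.ncard_windowInversions_mul_lt hr ht hdes) hwt rfl
  simpa using mul_mem this (inv_mem htH)

/-- In the group of bijections `w : ℤ → ℤ` with `w(i+r) = w(i)+r`,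
the subgroup generated by the Coxeter-type generators `s₁, …, s_r` together
with the shift `ρ : j ↦ j+1` is the whole group: membership in the generated
subgroup is equivalent to the periodicity condition. -/
theorem stmt5 (r : ℕ) (hr : 1 ≤ r)
    (ρ : Equiv.Perm ℤ) (hρ : ∀ j : ℤ, ρ j = j + 1)
    (s : ℤ → Equiv.Perm ℤ)
    (hs1 : ∀ i j : ℤ, ¬ j ≡ i [ZMOD (r : ℤ)] → ¬ j ≡ i + 1 [ZMOD (r : ℤ)] → s i j = j)
    (hs2 : ∀ i j : ℤ, j ≡ i + 1 [ZMOD (r : ℤ)] → s i j = j - 1)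
    (hs3 : ∀ i j : ℤ, j ≡ i [ZMOD (r : ℤ)] → s i j = j + 1) :
    ∀ w : Equiv.Perm ℤ,
      w ∈ Subgroup.closure ({ρ} ∪ (⋃ i ∈ Set.Icc (1 : ℤ) (r : ℤ), {s i}))
        ↔ PeriodicPerm r w := by
  have hρ' : ρ = Equiv.addRight 1 := Equiv.ext hρ
  have hs : ∀ i, IsAffineSwap r i (s i) := fun i => ⟨hs3 i, hs2 i, hs1 i⟩
  have hgen : Subgroup.closure ({ρ} ∪ (⋃ i ∈ Icc (1 : ℤ) r, {s i})) = periodicSubgroup r := by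
    refine le_antisymm (closure_le_periodicSubgroup ?_) (periodicSubgroup_le hr ?_ ?_)
    · rintro g (rfl | hg)
      · exact fun j => by rw [hρ, hρ]; ring
      · obtain ⟨i, -, rfl⟩ := mem_iUnion₂.mp hg
        exact (hs i).periodicPerm
    · exact hρ' ▸ Subgroup.subset_closure (mem_union_left _ rfl)
    · exact fun i hi => ⟨s i, Subgroup.subset_closure (mem_union_right _ (mem_biUnion hi rfl)),
        hs i⟩
  intro w
  rw [hgen, mem_periodicSubgroup]
end

section
/- For any w in the extended affine symmetric group W (bijections of ℤ commuting with translation by r), the inversion count ℓ'(w) = |{(i,j): 1 ≤ i ≤ r, i < j, w(i) > w(j)}| satisfies ℓ'(ρ^m w) = ℓ'(w) for every m ∈ ℤ, where ρ is the shift j ↦ j+1. -/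
/-- The inversion count `ℓ'(w) = |{(i,j) : 1 ≤ i ≤ r, i < j, w(i) > w(j)}|`. -/
noncomputable def affLen (r : ℕ) (w : ℤ ≃ ℤ) : ℕ :=
  {p : ℤ × ℤ | 1 ≤ p.1 ∧ p.1 ≤ (r : ℤ) ∧ p.1 < p.2 ∧ w p.2 < w p.1}.ncard

theorem affLen_mul_left_of_strictMono (r : ℕ) {σ : Equiv.Perm ℤ} (hσ : StrictMono σ) (w : ℤ ≃ ℤ) :
    affLen r (σ * (w : Equiv.Perm ℤ)) = affLen r w := by
  simp only [affLen, Equiv.Perm.mul_apply, hσ.lt_iff_lt]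

theorem zpow_apply_of_forall_apply_eq_add_one {ρ : Equiv.Perm ℤ} (hρ : ∀ j : ℤ, ρ j = j + 1)
    (m j : ℤ) : (ρ ^ m) j = j + m := by
  induction m using Int.induction_on generalizing j with
  | zero => simp
  | succ k ih => rw [zpow_add_one, Equiv.Perm.mul_apply, hρ, ih]; ring
  | pred k ih =>
    have hinv : ρ⁻¹ j = j - 1 := Equiv.Perm.inv_eq_iff_eq.mpr (by rw [hρ]; ring)
    rw [zpow_sub_one, Equiv.Perm.mul_apply, hinv, ih]; ring

theorem stmt7_general (r : ℕ) (w : ℤ ≃ ℤ)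
    (ρ : Equiv.Perm ℤ) (hρ : ∀ j : ℤ, ρ j = j + 1) (m : ℤ) :
    affLen r (ρ ^ m * (w : Equiv.Perm ℤ)) = affLen r w := by
  have hshift : StrictMono ⇑(ρ ^ m) := fun i j hij => by
    simpa only [zpow_apply_of_forall_apply_eq_add_one hρ, add_lt_add_iff_right] using hij
  exact affLen_mul_left_of_strictMono r hshift w

/-- for any `w` in the extended affine symmetric group and
`ρ : j ↦ j+1`, the inversion count satisfies `ℓ'(ρ^m w) = ℓ'(w)` for all
`m ∈ ℤ`. -/
theorem stmt7 (r : ℕ) (hr : 1 ≤ r) (w : ℤ ≃ ℤ) (hw : PeriodicPerm r w)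
    (ρ : Equiv.Perm ℤ) (hρ : ∀ j : ℤ, ρ j = j + 1) (m : ℤ) :
    affLen r (ρ ^ m * (w : Equiv.Perm ℤ)) = affLen r w :=
  stmt7_general r w ρ hρ m
end

section
/- With A, λ = ro(A), μ = co(A) as above, let ỹ_A be the permutation of ℤ obtained by the 'row-reading' construction: reading, column by column (over residues 1 ≤ j ≤ n of columns, and within each column over all row indices), the consecutive blocks of sizes a_{ij}, so that ỹ_A maps the j-th block structure of μ onto the positions determined by A. Then C_{ij}(A) := R_i^λ ∩ ỹ_A(R_j^μ) has cardinality a_{ij} for all i, j ∈ ℤ; in particular ỹ_A lies in the double coset 𝔖_λ y_A 𝔖_μ. -/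
/-!
The partial column sums `q j` cut the column block `R_j^μ` into consecutive segments of lengths
`a_{ij}`, and `ỹ_A` translates the `i`-th segment into the row block `R_i^λ`. Since the row blocks
are disjoint, `R_i^λ ∩ ỹ_A(R_j^μ)` is exactly the image of that segment.

For the double coset, let `y` be another periodic permutation with the same intersection numbers.
On one period of `ℤ`, the maps `x ↦ (column block of x, row block of ỹ_A x)` and
`x ↦ (column block of x, row block of y x)` have fibres of equal size, so some permutation `e` of
the period matches them. Its periodic extension `v` preserves the column blocks, and
`u = ỹ_A v⁻¹ y⁻¹` preserves the row blocks. This uses the fact that the blocks are `r`-periodic,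
`cm (j + n) = cm j + r`. That holds because of the diagonal periodicity of `A`: summing `A` over
`n` consecutive columns gives the same total as summing over `n` consecutive rows.
-/

open Set Function

theorem eq_add_sum_Ioc_of_eq_sub_one_add {M : Type*} [AddCommMonoid M] {f s : ℤ → M}
    (h : ∀ i, f i = f (i - 1) + s i) {a b : ℤ} (hab : a ≤ b) :
    f b = f a + ∑ t ∈ Finset.Ioc a b, s t := by
  induction b, hab using Int.leInduction with
  | base => simp
  | succ b hab ih =>
    rw [h (b + 1), add_sub_cancel_right, ih, ← Finset.insert_Ioc_right_eq_Ioc_add_one hab,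
      Finset.sum_insert (by simp), add_assoc, add_comm (s (b + 1))]

theorem add_period_of_eq_sub_one_add {f s : ℤ → ℤ} (h : ∀ i, f i = f (i - 1) + s i)
    {n : ℤ} (hs : ∀ i, s (i + n) = s i) (hn : 0 ≤ n) (i : ℤ) :
    f (i + n) = f i + ∑ t ∈ Finset.Ioc 0 n, s t := by
  have hconst : f (i + n) - f i = f (0 + n) - f 0 := by
    induction i using Int.induction_on with
    | zero => rfl
    | succ i ih =>
      have h1 := h (i + 1 + n)
      have h2 := h (i + 1)
      rw [show i + 1 + n - 1 = i + n by ring, show i + 1 + n = (i + 1) + n by ring, hs] at h1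
      simp only [add_sub_cancel_right] at h2
      linarith
    | pred i ih =>
      have h1 := h (-i + n)
      have h2 := h (-i)
      rw [show -i + n - 1 = -i - 1 + n by ring, hs] at h1
      linarith
  rw [zero_add, eq_add_sum_Ioc_of_eq_sub_one_add h hn] at hconst
  linarith

theorem apply_add_mul_of_apply_add {f : ℤ → ℤ} {p d : ℤ} (hf : ∀ x, f (x + p) = f x + d)
    (k x : ℤ) : f (x + k * p) = f x + k * d := by
  induction k using Int.induction_on with
  | zero => simp
  | succ k ih => rw [add_mul, one_mul, ← add_assoc, hf, ih]; ring
  | pred k ih =>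
    have := hf (x + (-k - 1) * p)
    rw [show x + (-k - 1) * p + p = x + -k * p by ring, ih] at this
    linarith

theorem exists_sub_one_lt_and_le {c : ℤ → ℤ} {a b x : ℤ} (hab : a ≤ b) (ha : c a < x)
    (hb : x ≤ c b) : ∃ i, c (i - 1) < x ∧ x ≤ c i := by
  by_contra! H
  have : ∀ i, a ≤ i → c i < x := fun i hi => by
    induction i, hi using Int.leInduction with
    | base => exact ha
    | succ i _ ih => exact H (i + 1) (by simpa using ih)
  exact (this b hab).not_ge hb

theorem monotone_of_eq_sub_one_add_natCast {f : ℤ → ℤ} {s : ℤ → ℕ}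
    (h : ∀ i, f i = f (i - 1) + s i) : Monotone f :=
  monotone_int_of_le_succ fun i => by
    rw [h (i + 1), add_sub_cancel_right]; exact le_add_of_nonneg_right (Nat.cast_nonneg _)

theorem Monotone.eq_of_mem_Ioc_sub_one {c : ℤ → ℤ} (hc : Monotone c) {x i j : ℤ}
    (hi : x ∈ Ioc (c (i - 1)) (c i)) (hj : x ∈ Ioc (c (j - 1)) (c j)) : i = j := by
  by_contra h
  exact Set.disjoint_left.1 (hc.pairwise_disjoint_on_Ioc_pred h) (by simpa using hi)
    (by simpa using hj)

/-- `I x` is the index `i` of the block `Ioc (c (i - 1)) (c i)` containing `x`. -/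
def IsBlockIndex (c I : ℤ → ℤ) : Prop := ∀ x a b, x ∈ Ioc (c a) (c b) ↔ I x ∈ Ioc a b

namespace IsBlockIndex

variable {c I : ℤ → ℤ}

theorem mem_Ioc_iff (hI : IsBlockIndex c I) {x i : ℤ} :
    x ∈ Ioc (c (i - 1)) (c i) ↔ I x = i := by
  rw [hI]; simp only [mem_Ioc]; omega

theorem Ioc_eq_preimage (hI : IsBlockIndex c I) (i : ℤ) :
    Ioc (c (i - 1)) (c i) = I ⁻¹' {i} :=
  Set.ext fun _ => hI.mem_Ioc_iff

theorem add_period (hI : IsBlockIndex c I) {n r : ℤ} (hc : ∀ i, c (i + n) = c i + r) (x : ℤ) :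
    I (x + r) = I x + n := by
  rw [← hI.mem_Ioc_iff, show I x + n - 1 = I x - 1 + n by ring, hc, hc, mem_Ioc,
    add_lt_add_iff_right, add_le_add_iff_right, ← mem_Ioc, hI.mem_Ioc_iff]

end IsBlockIndex

theorem exists_isBlockIndex {c : ℤ → ℤ} (hc : Monotone c) {n r : ℤ}
    (hper : ∀ i, c (i + n) = c i + r) (hr : 0 < r) : ∃ I, IsBlockIndex c I := by
  have hcover : ∀ x, ∃ i, c (i - 1) < x ∧ x ≤ c i := fun x => by
    have hk := apply_add_mul_of_apply_add hper
    have hr' : 1 ≤ r := hr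
    obtain ⟨a, ha⟩ : ∃ a, c a < x := ⟨0 + (-|x - c 0| - 1) * n, by
      rw [hk]
      nlinarith [neg_abs_le (x - c 0), mul_nonneg (abs_nonneg (x - c 0)) (sub_nonneg.2 hr')]⟩
    obtain ⟨b, hb⟩ : ∃ b, x ≤ c b := ⟨0 + |x - c 0| * n, by
      rw [hk]
      nlinarith [le_abs_self (x - c 0), mul_nonneg (abs_nonneg (x - c 0)) (sub_nonneg.2 hr')]⟩
    exact exists_sub_one_lt_and_le (le_max_left a b) ha (hb.trans (hc (le_max_right a b)))
  choose I hI using hcover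
  refine ⟨I, fun x a b => ⟨fun ⟨hxa, hxb⟩ => ⟨?_, ?_⟩, fun ⟨hia, hib⟩ => ⟨?_, ?_⟩⟩⟩
  · by_contra! h; exact (hxa.trans_le (hI x).2).not_ge (hc h)
  · by_contra! h; exact (hI x).1.not_ge (hxb.trans (hc (Int.le_sub_one_of_lt h)))
  · exact (hc (Int.le_sub_one_of_lt hia)).trans_lt (hI x).1
  · exact (hI x).2.trans (hc hib)

namespace PeriodicPerm

variable {r : ℕ} {w v : Equiv.Perm ℤ}

theorem inv (hw : PeriodicPerm r w) : PeriodicPerm r w⁻¹ := fun x => by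
  rw [Equiv.Perm.inv_def, Equiv.symm_apply_eq, hw, Equiv.apply_symm_apply]

theorem mul (hw : PeriodicPerm r w) (hv : PeriodicPerm r v) : PeriodicPerm r (w * v) :=
  fun x => by rw [Equiv.Perm.mul_apply, hv, hw, Equiv.Perm.mul_apply]

end PeriodicPerm

noncomputable def iocDivModEquiv {p : ℤ} (hp : 0 < p) (a : ℤ) : ℤ ≃ Ioc a (a + p) × ℤ where
  toFun x := (⟨toIocMod hp a x, toIocMod_mem_Ioc hp a x⟩, toIocDiv hp a x)
  invFun y := y.1 + y.2 * p
  left_inv x := by simpa using toIocMod_add_toIocDiv_zsmul hp a x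
  right_inv := by
    rintro ⟨⟨m, hm⟩, k⟩
    have hdiv : toIocDiv hp a (m + k * p) = k :=
      toIocDiv_eq_of_sub_zsmul_mem_Ioc hp (by simpa using hm)
    have hmod : toIocMod hp a (m + k * p) = m := by
      rw [toIocMod, hdiv]; simp
    simp only [hdiv, hmod]

@[simp]
theorem iocDivModEquiv_symm_apply {p : ℤ} (hp : 0 < p) (a : ℤ) (y : Ioc a (a + p) × ℤ) :
    (iocDivModEquiv hp a).symm y = y.1 + y.2 * p :=
  rfl

theorem finsum_eq_sum_Ioc_finsum_add_mul {M : Type*} [AddCommMonoid M] {f : ℤ → M}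
    (hf : (support f).Finite) {p : ℤ} (hp : 0 < p) (a : ℤ) :
    ∑ᶠ x, f x = ∑ b ∈ Finset.Ioc a (a + p), ∑ᶠ k : ℤ, f (b + k * p) := by
  have hfin : (support fun y => f ((iocDivModEquiv hp a).symm y)).Finite := by
    rw [← comp_def, support_comp_eq_preimage, ← Equiv.image_eq_preimage_symm]
    exact hf.image _
  rw [← finsum_comp_equiv (iocDivModEquiv hp a).symm, finsum_curry _ hfin]
  simp only [iocDivModEquiv_symm_apply]
  rw [finsum_set_coe_eq_finsum_mem (Ioc a (a + p)) (f := fun b => ∑ᶠ k : ℤ, f (b + k * p)),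
    ← Finset.coe_Ioc, finsum_mem_coe_finset]

noncomputable def periodicExtend {p : ℤ} (hp : 0 < p) (a : ℤ) (e : Equiv.Perm (Ioc a (a + p))) :
    Equiv.Perm ℤ :=
  (iocDivModEquiv hp a).trans ((e.prodCongr (Equiv.refl ℤ)).trans (iocDivModEquiv hp a).symm)

section PeriodicExtend

variable {p : ℤ} (hp : 0 < p) {a : ℤ} (e : Equiv.Perm (Ioc a (a + p)))

theorem periodicExtend_apply_add_mul (m : Ioc a (a + p)) (k : ℤ) :
    periodicExtend hp a e (m + k * p) = e m + k * p := by
  have : (m : ℤ) + k * p = (iocDivModEquiv hp a).symm (m, k) := rfl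
  rw [this]
  simp only [periodicExtend, Equiv.trans_apply, Equiv.apply_symm_apply]
  rfl

theorem exists_eq_Ioc_add_mul (hp : 0 < p) (x : ℤ) : ∃ (m : Ioc a (a + p)) (k : ℤ), x = m + k * p :=
  ⟨_, _, ((iocDivModEquiv hp a).symm_apply_apply x).symm⟩

theorem periodicPerm_periodicExtend {r : ℕ} (hr : 0 < (r : ℤ)) (e : Equiv.Perm (Ioc a (a + r))) :
    PeriodicPerm r (periodicExtend hr a e) := fun x => by
  obtain ⟨m, k, rfl⟩ := exists_eq_Ioc_add_mul (a := a) hr x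
  rw [add_assoc, ← add_one_mul, periodicExtend_apply_add_mul, periodicExtend_apply_add_mul]
  ring

theorem comp_periodicExtend {g h : ℤ → ℤ} {d : ℤ} (hg : ∀ x, g (x + p) = g x + d)
    (hh : ∀ x, h (x + p) = h x + d) (he : ∀ m, g (e m) = h m) (x : ℤ) :
    g (periodicExtend hp a e x) = h x := by
  obtain ⟨m, k, rfl⟩ := exists_eq_Ioc_add_mul (a := a) hp x
  rw [periodicExtend_apply_add_mul, apply_add_mul_of_apply_add hg,
    apply_add_mul_of_apply_add hh, he]

end PeriodicExtend

theorem exists_perm_comp_eq_of_ncard_fiber_eq {α γ : Type*} {X : Set α} (hX : X.Finite)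
    {f g : α → γ} (h : ∀ c, (X ∩ f ⁻¹' {c}).ncard = (X ∩ g ⁻¹' {c}).ncard) :
    ∃ e : Equiv.Perm X, ∀ m, g (e m) = f m := by
  have : Finite X := hX.to_subtype
  have hcard (φ : α → γ) (c : γ) : Nat.card {m : X // φ m = c} = (X ∩ φ ⁻¹' {c}).ncard :=
    (Nat.card_congr (Equiv.subtypeSubtypeEquivSubtypeInter (· ∈ X) (φ · = c))).trans
      (Nat.card_coe_set_eq _)
  let e (c : γ) : {m : X // f m = c} ≃ {m : X // g m = c} :=
    (Finite.card_eq.1 ((hcard f c).trans ((h c).trans (hcard g c).symm))).some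
  exact ⟨Equiv.ofFiberEquiv e, Equiv.ofFiberEquiv_map e⟩

theorem Equiv.Perm.image_preimage_singleton_of_comp_eq {α β : Type*} {u : Equiv.Perm α}
    {f : α → β} (hu : ∀ x, f (u x) = f x) (b : β) : u '' (f ⁻¹' {b}) = f ⁻¹' {b} := by
  rw [Equiv.image_eq_preimage_symm, ← preimage_comp]
  congr 1
  ext z
  simpa using (hu (u.symm z)).symm

def IsPartialSum (Q : ℤ → ℤ) (a : ℤ → ℕ) : Prop :=
  (∀ i, Q i = Q (i - 1) + a i) ∧ ∃ N, ∀ i ≤ N, Q i = 0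

namespace IsPartialSum

variable {Q : ℤ → ℤ} {a : ℤ → ℕ}

theorem nonneg (hQ : IsPartialSum Q a) (i : ℤ) : 0 ≤ Q i := by
  obtain ⟨N, hN⟩ := hQ.2
  rw [← hN (min i N) (min_le_right i N)]
  exact monotone_of_eq_sub_one_add_natCast hQ.1 (min_le_left i N)

theorem exists_forall_ge_eq_finsum (hQ : IsPartialSum Q a) (ha : (support a).Finite) :
    ∃ M, ∀ i, M ≤ i → Q i = ↑(∑ᶠ t, a t) := by
  obtain ⟨N, hN⟩ := hQ.2
  obtain ⟨B, hB⟩ := ha.bddAbove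
  refine ⟨max N B, fun i hi => ?_⟩
  have hsupp : support a ⊆ Finset.Ioc N i := fun t ht => by
    refine Finset.mem_coe.2 (Finset.mem_Ioc.2 ⟨?_, (hB ht).trans (le_of_max_le_right hi)⟩)
    by_contra! htN
    have := hQ.1 t
    rw [hN t htN, hN (t - 1) (by omega)] at this
    exact ht (by omega)
  rw [finsum_eq_sum_of_support_subset a hsupp, Nat.cast_sum,
    eq_add_sum_Ioc_of_eq_sub_one_add hQ.1 (le_of_max_le_left hi), hN N le_rfl, zero_add]

theorem le_finsum (hQ : IsPartialSum Q a) (ha : (support a).Finite) (i : ℤ) :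
    Q i ≤ ↑(∑ᶠ t, a t) := by
  obtain ⟨M, hM⟩ := hQ.exists_forall_ge_eq_finsum ha
  rw [← hM (max i M) (le_max_right i M)]
  exact monotone_of_eq_sub_one_add_natCast hQ.1 (le_max_left i M)

end IsPartialSum

section PeriodicMatrix

variable {A : ℤ → ℤ → ℕ} {n : ℤ}

theorem apply_add_mul_add_mul (hA : ∀ i j, A (i + n) (j + n) = A i j) (k i j : ℤ) :
    A (i + k * n) (j + k * n) = A i j := by
  have hper : Periodic (fun t => A (i + t) (j + t)) n := fun t => by
    simpa [add_assoc] using hA (i + t) (j + t)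
  simpa using hper.int_mul k 0

theorem finsum_row_add_period (hA : ∀ i j, A (i + n) (j + n) = A i j) (i : ℤ) :
    ∑ᶠ j, A (i + n) j = ∑ᶠ j, A i j := by
  rw [← finsum_comp_equiv (Equiv.addRight n)]
  simp [hA]

theorem finsum_col_add_period (hA : ∀ i j, A (i + n) (j + n) = A i j) (j : ℤ) :
    ∑ᶠ i, A i (j + n) = ∑ᶠ i, A i j := by
  rw [← finsum_comp_equiv (Equiv.addRight n)]
  simp [hA]

theorem finsum_add_mul_left_eq_finsum_add_mul_right
    (hA : ∀ i j, A (i + n) (j + n) = A i j) (i j : ℤ) :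
    ∑ᶠ k : ℤ, A (i + k * n) j = ∑ᶠ k : ℤ, A i (j + k * n) := by
  rw [← finsum_comp_equiv (Equiv.neg ℤ)]
  congr 1
  ext k
  simpa using apply_add_mul_add_mul hA (-k) i (j + k * n)

/-- Both sides sum `A` over a fundamental domain of the diagonal translation action on `ℤ × ℤ`. -/
theorem sum_Ioc_finsum_col_eq_sum_Ioc_finsum_row (hA : ∀ i j, A (i + n) (j + n) = A i j)
    (hn : 0 < n) (hrow : ∀ i, (support (A i)).Finite)
    (hcol : ∀ j, (support fun i => A i j).Finite) :
    ∑ j ∈ Finset.Ioc 0 n, ∑ᶠ i, A i j = ∑ i ∈ Finset.Ioc 0 n, ∑ᶠ j, A i j := by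
  calc ∑ j ∈ Finset.Ioc 0 n, ∑ᶠ i, A i j
      = ∑ j ∈ Finset.Ioc 0 n, ∑ i ∈ Finset.Ioc 0 n, ∑ᶠ k : ℤ, A i (j + k * n) := by
        refine Finset.sum_congr rfl fun j _ => ?_
        simp_rw [finsum_eq_sum_Ioc_finsum_add_mul (hcol j) hn 0, zero_add,
          finsum_add_mul_left_eq_finsum_add_mul_right hA]
    _ = ∑ i ∈ Finset.Ioc 0 n, ∑ᶠ j, A i j := by
        rw [Finset.sum_comm]
        refine Finset.sum_congr rfl fun i _ => ?_
        rw [finsum_eq_sum_Ioc_finsum_add_mul (hrow i) hn 0, zero_add]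

end PeriodicMatrix

theorem Ioc_inter_image_eq_image_Ioc {A : ℤ → ℤ → ℕ} {cl cm : ℤ → ℤ} {p q : ℤ → ℤ → ℤ}
    {ty : ℤ → ℤ} (hrow : ∀ i, (support (A i)).Finite)
    (hcol : ∀ j, (support fun i => A i j).Finite)
    (hcl : ∀ i, cl i = cl (i - 1) + ↑(∑ᶠ j, A i j))
    (hcm : ∀ j, cm j = cm (j - 1) + ↑(∑ᶠ i, A i j))
    (hp : ∀ i, IsPartialSum (p i) (A i)) (hq : ∀ j, IsPartialSum (q j) fun i => A i j)
    (hty : ∀ i j x, cm (j - 1) + q j (i - 1) < x → x ≤ cm (j - 1) + q j i →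
      ty x = x - (cm (j - 1) + q j (i - 1)) + (cl (i - 1) + p i (j - 1))) (i j : ℤ) :
    Ioc (cl (i - 1)) (cl i) ∩ ty '' Ioc (cm (j - 1)) (cm j) =
      ty '' Ioc (cm (j - 1) + q j (i - 1)) (cm (j - 1) + q j i) := by
  have hmaps_row : ∀ i x, x ∈ Ioc (cm (j - 1) + q j (i - 1)) (cm (j - 1) + q j i) →
      ty x ∈ Ioc (cl (i - 1)) (cl i) := by
    rintro i x ⟨hx1, hx2⟩
    have := (hp i).1 j
    have : q j i = q j (i - 1) + A i j := (hq j).1 i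
    have := (hp i).nonneg (j - 1)
    have := (hp i).le_finsum (hrow i) j
    have := hcl i
    rw [hty i j x hx1 hx2, mem_Ioc]
    omega
  have hsub_col : ∀ i, Ioc (cm (j - 1) + q j (i - 1)) (cm (j - 1) + q j i) ⊆
      Ioc (cm (j - 1)) (cm j) := by
    rintro i x ⟨hx1, hx2⟩
    have := (hq j).nonneg (i - 1)
    have := (hq j).le_finsum (hcol j) i
    have := hcm j
    constructor <;> omega
  have hcover : ∀ x ∈ Ioc (cm (j - 1)) (cm j),
      ∃ i, x ∈ Ioc (cm (j - 1) + q j (i - 1)) (cm (j - 1) + q j i) := by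
    rintro x ⟨hx1, hx2⟩
    obtain ⟨N, hN⟩ := (hq j).2
    obtain ⟨M, hM⟩ := (hq j).exists_forall_ge_eq_finsum (hcol j)
    refine exists_sub_one_lt_and_le (c := fun i => cm (j - 1) + q j i) (le_max_left N M) ?_ ?_
    · simpa [hN N le_rfl] using hx1
    · simpa [hM _ (le_max_right N M), ← hcm j] using hx2
  ext z
  constructor
  · rintro ⟨hz, x, hx, rfl⟩
    obtain ⟨i', hi'⟩ := hcover x hx
    obtain rfl : i' = i :=
      (monotone_of_eq_sub_one_add_natCast hcl).eq_of_mem_Ioc_sub_one (hmaps_row i' x hi') hz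
    exact mem_image_of_mem ty hi'
  · rintro ⟨x, hx, rfl⟩
    exact ⟨hmaps_row i x hx, x, hsub_col i hx, rfl⟩

theorem ncard_Ioc_inter_fiber {cl cm ri ci : ℤ → ℤ} (hri : IsBlockIndex cl ri)
    (hci : IsBlockIndex cm ci) (w : ℤ ≃ ℤ) (a b j i : ℤ) :
    (Ioc (cm a) (cm b) ∩ (fun x => (ci x, ri (w x))) ⁻¹' {(j, i)}).ncard =
      if j ∈ Ioc a b then (Ioc (cl (i - 1)) (cl i) ∩ w '' Ioc (cm (j - 1)) (cm j)).ncard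
      else 0 := by
  have hfiber : Ioc (cm a) (cm b) ∩ (fun x => (ci x, ri (w x))) ⁻¹' {(j, i)} =
      {x | ci x ∈ Ioc a b} ∩ (Ioc (cm (j - 1)) (cm j) ∩ w ⁻¹' Ioc (cl (i - 1)) (cl i)) := by
    ext x
    simp only [mem_inter_iff, mem_preimage, mem_singleton_iff, Prod.mk.injEq, mem_ofPred_eq,
      hri.mem_Ioc_iff, hci.mem_Ioc_iff, hci x a b]
  split_ifs with hj
  · rw [hfiber, inter_eq_right.2 fun x hx => by rwa [mem_ofPred_eq, hci.mem_Ioc_iff.1 hx.1],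
      ← ncard_image_of_injective _ w.injective, image_inter_preimage, inter_comm]
  · rw [hfiber, ncard_eq_zero]
    exact eq_empty_of_forall_notMem fun x hx => hj (hci.mem_Ioc_iff.1 hx.2.1 ▸ hx.1)

theorem exists_eq_mul_mul_of_ncard_eq {n : ℤ} {r : ℕ} (hr : 0 < r) {cl cm : ℤ → ℤ}
    (hcl : Monotone cl) (hcm : Monotone cm)
    (hclp : ∀ i, cl (i + n) = cl i + r) (hcmp : ∀ j, cm (j + n) = cm j + r)
    {w y : Equiv.Perm ℤ} (hw : PeriodicPerm r w) (hy : PeriodicPerm r y)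
    (hwy : ∀ i j, (Ioc (cl (i - 1)) (cl i) ∩ w '' Ioc (cm (j - 1)) (cm j)).ncard =
      (Ioc (cl (i - 1)) (cl i) ∩ y '' Ioc (cm (j - 1)) (cm j)).ncard) :
    ∃ u v : Equiv.Perm ℤ, PeriodicPerm r u ∧ PeriodicPerm r v ∧
      (∀ k, u '' Ioc (cl (k - 1)) (cl k) = Ioc (cl (k - 1)) (cl k)) ∧
      (∀ l, v '' Ioc (cm (l - 1)) (cm l) = Ioc (cm (l - 1)) (cm l)) ∧ w = u * y * v := by
  have hr' : (0 : ℤ) < r := by exact_mod_cast hr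
  obtain ⟨ri, hri⟩ := exists_isBlockIndex hcl hclp hr'
  obtain ⟨ci, hci⟩ := exists_isBlockIndex hcm hcmp hr'
  obtain ⟨e, he⟩ := exists_perm_comp_eq_of_ncard_fiber_eq (X := Ioc (cm 0) (cm 0 + r))
    (finite_Ioc _ _) (f := fun x => (ci x, ri (w x))) (g := fun x => (ci x, ri (y x)))
    (by rintro ⟨j, i⟩; rw [← hcmp 0, ncard_Ioc_inter_fiber hri hci,
      ncard_Ioc_inter_fiber hri hci, hwy])
  set v := periodicExtend hr' (cm 0) e
  have hv : PeriodicPerm r v := periodicPerm_periodicExtend hr' e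
  have hv_col : ∀ x, ci (v x) = ci x := comp_periodicExtend hr' e (hci.add_period hcmp)
    (hci.add_period hcmp) fun m => congrArg Prod.fst (he m)
  have hv_row : ∀ x, ri (y (v x)) = ri (w x) := comp_periodicExtend hr' e
    (g := fun x => ri (y x)) (h := fun x => ri (w x))
    (fun x => by rw [hy, hri.add_period hclp]) (fun x => by rw [hw, hri.add_period hclp])
    fun m => congrArg Prod.snd (he m)
  have hu_row : ∀ z, ri ((w * v⁻¹ * y⁻¹) z) = ri z := fun z => by
    simpa using (hv_row (v⁻¹ (y⁻¹ z))).symm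
  refine ⟨w * v⁻¹ * y⁻¹, v, (hw.mul hv.inv).mul hy.inv, hv, fun k => ?_, fun l => ?_, by group⟩
  · rw [hri.Ioc_eq_preimage]
    exact Equiv.Perm.image_preimage_singleton_of_comp_eq hu_row k
  · rw [hci.Ioc_eq_preimage]
    exact Equiv.Perm.image_preimage_singleton_of_comp_eq hv_col l

/-- Here `R_i^λ = Ioc (cl (i - 1)) (cl i)` and `R_j^μ = Ioc (cm (j - 1)) (cm j)`; the second
conjunct says `ỹ_A ∈ 𝔖_λ y 𝔖_μ` for every `y` with the same matrix `A`. -/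
theorem stmt9_general (n r : ℕ) (hn : 1 ≤ n) (hr : 1 ≤ r)
    (A : ℤ → ℤ → ℕ)
    (hAper : ∀ i j : ℤ, A (i + n) (j + n) = A i j)
    (hrow : ∀ i : ℤ, (Function.support (A i)).Finite)
    (hcol : ∀ j : ℤ, (Function.support (fun i => A i j)).Finite)
    (htot : ∑ i ∈ Finset.Icc (1 : ℤ) (n : ℤ), ∑ᶠ j : ℤ, A i j = r)
    (cl cm : ℤ → ℤ)
    (hcl : ∀ i : ℤ, cl i = cl (i - 1) + ∑ᶠ j : ℤ, A i j)
    (hcm : ∀ j : ℤ, cm j = cm (j - 1) + ∑ᶠ i : ℤ, A i j)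
    (p : ℤ → ℤ → ℤ)
    (hp : ∀ i j : ℤ, p i j = p i (j - 1) + A i j)
    (hp0 : ∀ i : ℤ, ∃ N : ℤ, ∀ j ≤ N, p i j = 0)
    (q : ℤ → ℤ → ℤ)
    (hq : ∀ j i : ℤ, q j i = q j (i - 1) + A i j)
    (hq0 : ∀ j : ℤ, ∃ N : ℤ, ∀ i ≤ N, q j i = 0)
    (ty : ℤ ≃ ℤ) (hty : PeriodicPerm r ty)
    (htydef : ∀ i j x : ℤ, cm (j - 1) + q j (i - 1) < x → x ≤ cm (j - 1) + q j i →
      ty x = x - (cm (j - 1) + q j (i - 1)) + (cl (i - 1) + p i (j - 1))) :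
    (∀ i j : ℤ,
      (Set.Ioc (cl (i - 1)) (cl i) ∩ (⇑ty '' Set.Ioc (cm (j - 1)) (cm j))).ncard = A i j)
    ∧ ∀ y : ℤ ≃ ℤ, PeriodicPerm r y →
        (∀ k l : ℤ,
          (Set.Ioc (cl (k - 1)) (cl k) ∩ (⇑y '' Set.Ioc (cm (l - 1)) (cm l))).ncard = A k l) →
        ∃ u v : ℤ ≃ ℤ, PeriodicPerm r u ∧ PeriodicPerm r v ∧
          (∀ k : ℤ, ⇑u '' Set.Ioc (cl (k - 1)) (cl k) = Set.Ioc (cl (k - 1)) (cl k)) ∧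
          (∀ l : ℤ, ⇑v '' Set.Ioc (cm (l - 1)) (cm l) = Set.Ioc (cm (l - 1)) (cm l)) ∧
          (ty : Equiv.Perm ℤ) = u * y * v := by
  have hn' : (0 : ℤ) < n := by exact_mod_cast hn
  have htot' : ∑ i ∈ Finset.Ioc (0 : ℤ) n, ∑ᶠ j, A i j = r := by
    rw [← htot]; congr 1; ext; simp; omega
  have hclp : ∀ i, cl (i + n) = cl i + r := fun i => by
    rw [add_period_of_eq_sub_one_add hcl (fun i => by rw [finsum_row_add_period hAper]) hn'.le,
      ← Nat.cast_sum, htot']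
  have hcmp : ∀ j, cm (j + n) = cm j + r := fun j => by
    rw [add_period_of_eq_sub_one_add hcm (fun j => by rw [finsum_col_add_period hAper]) hn'.le,
      ← Nat.cast_sum, sum_Ioc_finsum_col_eq_sum_Ioc_finsum_row hAper hn' hrow hcol, htot']
  have hcount : ∀ i j, (Ioc (cl (i - 1)) (cl i) ∩ ty '' Ioc (cm (j - 1)) (cm j)).ncard = A i j :=
    fun i j => by
      rw [Ioc_inter_image_eq_image_Ioc hrow hcol hcl hcm (fun i => ⟨hp i, hp0 i⟩)
        (fun j => ⟨hq j, hq0 j⟩) htydef, ncard_image_of_injective _ ty.injective,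
        ← Finset.coe_Ioc, ncard_coe_finset, Int.card_Ioc, hq j i]
      simp
  exact ⟨hcount, fun y hy hyA => exists_eq_mul_mul_of_ncard_eq hr
    (monotone_of_eq_sub_one_add_natCast hcl) (monotone_of_eq_sub_one_add_natCast hcm) hclp hcmp
    hty hy fun i j => (hcount i j).trans (hyA i j).symm⟩

/-- With `A` an `n`-periodic ℕ-matrix of total sum `r`,
`cl, cm` the cumulative row/column sums (giving blocks `R_i^λ`, `R_j^μ`),
`p i j = Σ_{t ≤ j} a_{it}` the partial row sums and `q j i = Σ_{t ≤ i} a_{tj}`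
the partial column sums, let `ty = ỹ_A` be the reading-word permutation, i.e.
the bijection translating each consecutive segment
`C_{ji}(ᵗA) = (cm(j-1)+q j (i-1), cm(j-1)+q j i]` of `R_j^μ` onto the segment
`C_{ij}(A) = (cl(i-1)+p i (j-1), cl(i-1)+p i j]` of `R_i^λ`. Then
`|R_i^λ ∩ ty(R_j^μ)| = a_{ij}` for all `i, j`; in particular `ty` lies in the
double coset `𝔖_λ y_A 𝔖_μ` of any `y_A` with the same matrix `A`. -/
theorem stmt9 (n r : ℕ) (hn : 1 ≤ n) (hr : 1 ≤ r)
    (A : ℤ → ℤ → ℕ)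
    (hAper : ∀ i j : ℤ, A (i + n) (j + n) = A i j)
    (hrow : ∀ i : ℤ, (Function.support (A i)).Finite)
    (hcol : ∀ j : ℤ, (Function.support (fun i => A i j)).Finite)
    (htot : ∑ i ∈ Finset.Icc (1 : ℤ) (n : ℤ), ∑ᶠ j : ℤ, A i j = r)
    (cl cm : ℤ → ℤ)
    (hcl0 : cl 0 = 0) (hcl : ∀ i : ℤ, cl i = cl (i - 1) + ∑ᶠ j : ℤ, A i j)
    (hcm0 : cm 0 = 0) (hcm : ∀ j : ℤ, cm j = cm (j - 1) + ∑ᶠ i : ℤ, A i j)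
    (p : ℤ → ℤ → ℤ)
    (hp : ∀ i j : ℤ, p i j = p i (j - 1) + A i j)
    (hp0 : ∀ i : ℤ, ∃ N : ℤ, ∀ j ≤ N, p i j = 0)
    (q : ℤ → ℤ → ℤ)
    (hq : ∀ j i : ℤ, q j i = q j (i - 1) + A i j)
    (hq0 : ∀ j : ℤ, ∃ N : ℤ, ∀ i ≤ N, q j i = 0)
    (ty : ℤ ≃ ℤ) (hty : PeriodicPerm r ty)
    (htydef : ∀ i j x : ℤ, cm (j - 1) + q j (i - 1) < x → x ≤ cm (j - 1) + q j i →
      ty x = x - (cm (j - 1) + q j (i - 1)) + (cl (i - 1) + p i (j - 1))) :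
    (∀ i j : ℤ,
      (Set.Ioc (cl (i - 1)) (cl i) ∩ (⇑ty '' Set.Ioc (cm (j - 1)) (cm j))).ncard = A i j)
    ∧ ∀ y : ℤ ≃ ℤ, PeriodicPerm r y →
        (∀ k l : ℤ,
          (Set.Ioc (cl (k - 1)) (cl k) ∩ (⇑y '' Set.Ioc (cm (l - 1)) (cm l))).ncard = A k l) →
        ∃ u v : ℤ ≃ ℤ, PeriodicPerm r u ∧ PeriodicPerm r v ∧
          (∀ k : ℤ, ⇑u '' Set.Ioc (cl (k - 1)) (cl k) = Set.Ioc (cl (k - 1)) (cl k)) ∧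
          (∀ l : ℤ, ⇑v '' Set.Ioc (cm (l - 1)) (cm l) = Set.Ioc (cm (l - 1)) (cm l)) ∧
          (ty : Equiv.Perm ℤ) = u * y * v :=
  stmt9_general n r hn hr A hAper hrow hcol htot cl cm hcl hcm p hp hp0 q hq hq0 ty hty htydef
end

section
/- Let A be an n-periodic ℕ-matrix with σ(A) = r as above and let w be any element of the double coset 𝔖_λ y_A 𝔖_μ (λ = ro(A), μ = co(A)). Then ℓ(w) ≥ Σ_{1≤i≤n, i<k, j>l} a_{ij} a_{kl}, with equality when w = ỹ_A is the reading-word representative. -/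
open Function

theorem PeriodicPerm.periodic_sub_s10 {r : ℕ} {w : ℤ ≃ ℤ} (hw : PeriodicPerm r w) :
    Periodic (fun x => w x - x) r := fun x => by
  simp only [hw x]
  ring

theorem PeriodicPerm.apply_add_zsmul {r : ℕ} {w : ℤ ≃ ℤ} (hw : PeriodicPerm r w) (x t : ℤ) :
    w (x + t • (r : ℤ)) = w x + t • (r : ℤ) := by
  linarith [hw.periodic_sub_s10.zsmul t x]

theorem PeriodicPerm.exists_abs_sub_le_s10 {r : ℕ} (hr : 0 < r) {w : ℤ ≃ ℤ} (hw : PeriodicPerm r w) :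
    ∃ B, ∀ x, |w x - x| ≤ B := by
  have hfin : (Set.range fun x => w x - x).Finite := by
    refine ((Set.finite_Ico 0 (r : ℤ)).image fun x => w x - x).subset ?_
    rintro _ ⟨x, rfl⟩
    obtain ⟨y, hy, hxy⟩ := hw.periodic_sub_s10.exists_mem_Ico₀ (by exact_mod_cast hr) x
    exact ⟨y, hy, hxy.symm⟩
  obtain ⟨a, ha⟩ := hfin.bddAbove
  obtain ⟨b, hb⟩ := hfin.bddBelow
  exact ⟨max a (-b), fun x => abs_le.2
    ⟨by linarith [hb ⟨x, rfl⟩, le_max_right a (-b)], (ha ⟨x, rfl⟩).trans (le_max_left a (-b))⟩⟩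

namespace AffineDoubleCoset

/-- The `i`-th block `(G (i - 1), G i]` of the segmentation of `ℤ` with partial sums `G`; for the
partial row and column sums `cl`, `cm` of `A` these are the blocks `R_i^λ` and `R_j^μ`. -/
def block (G : ℤ → ℤ) (i : ℤ) : Set ℤ := Set.Ioc (G (i - 1)) (G i)

section Block

variable {G : ℤ → ℤ} {x y z a b i k : ℤ}

theorem lt_of_mem_block (hG : Monotone G) (hx : x ∈ block G i) (hy : y ∈ block G k)
    (hik : i < k) : x < y :=
  calc x ≤ G i := hx.2
    _ ≤ G (k - 1) := hG (by omega)
    _ < y := hy.1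

theorem le_of_mem_block (hG : Monotone G) (hx : x ∈ block G i) (hy : y ∈ block G k)
    (hxy : x ≤ y) : i ≤ k :=
  not_lt.1 fun hki => (lt_of_mem_block hG hy hx hki).not_ge hxy

theorem eq_of_mem_block (hG : Monotone G) (hi : z ∈ block G i) (hk : z ∈ block G k) : i = k :=
  le_antisymm (le_of_mem_block hG hi hk le_rfl) (le_of_mem_block hG hk hi le_rfl)

theorem mem_Ioc_iff_of_mem_block (hG : Monotone G) (hz : z ∈ block G i) :
    z ∈ Set.Ioc (G a) (G b) ↔ i ∈ Set.Ioc a b := by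
  obtain ⟨hz₁, hz₂⟩ := hz
  constructor
  · rintro ⟨ha, hb⟩
    refine ⟨not_le.1 fun hia => ?_, not_lt.1 fun hbi => ?_⟩
    · exact (hz₂.trans (hG hia)).not_gt ha
    · exact (hb.trans (hG (by omega : b ≤ i - 1))).not_gt hz₁
  · rintro ⟨hai, hib⟩
    exact ⟨(hG (by omega : a ≤ i - 1)).trans_lt hz₁, hz₂.trans (hG hib)⟩

theorem exists_mem_block (hG : Monotone G) (ha : G a < z) (hb : z ≤ G b) :
    ∃ i, z ∈ block G i := by
  obtain ⟨i, hi, hmin⟩ := Int.exists_least_of_bdd (P := fun j => z ≤ G j)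
    ⟨a, fun j hj => not_lt.1 fun hja => (hj.trans (hG hja.le)).not_gt ha⟩ ⟨b, hb⟩
  exact ⟨i, not_le.1 fun h => (hmin (i - 1) h).not_gt (by omega), hi⟩

theorem exists_mem_block_of_add_period (hG : Monotone G) {n c : ℤ}
    (hper : ∀ j, G (j + n) = G j + c) (hc : 0 < c) (z : ℤ) : ∃ i, z ∈ block G i := by
  have hmul : ∀ t : ℤ, G (t * n) = G 0 + t * c := by
    have : Periodic (fun t : ℤ => G (t * n) - t * c) 1 := fun t => by
      simp only [add_mul, one_mul, hper]; ring
    intro t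
    have := this.int_mul t 0
    simp only [Int.cast_id, zero_add, mul_one, zero_mul, sub_zero] at this
    linarith
  set t := |z - G 0| + 1
  refine exists_mem_block hG (a := -t * n) (b := t * n) ?_ ?_ <;> rw [hmul] <;>
    nlinarith [le_abs_self (z - G 0), neg_abs_le (z - G 0)]

end Block

section Cumulative

variable {F : ℤ → ℤ} {g : ℤ → ℕ}

theorem monotone_of_cumulative (hF : ∀ j, F j = F (j - 1) + g j) : Monotone F :=
  monotone_int_of_le_succ fun j => by
    have := hF (j + 1)
    simp only [add_sub_cancel_right] at this
    omega

theorem sub_eq_sum_Ioc_of_cumulative (hF : ∀ j, F j = F (j - 1) + g j) {a b : ℤ} (hab : a ≤ b) :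
    F b - F a = ∑ m ∈ Finset.Ioc a b, (g m : ℤ) := by
  induction b, hab using Int.leInduction with
  | base => simp
  | succ b hab ih =>
    rw [← Finset.insert_Ioc_right_eq_Ioc_add_one hab, Finset.sum_insert (by simp), hF (b + 1),
      add_sub_cancel_right]
    omega

theorem exists_forall_ge_eq_finsum_of_cumulative (hF : ∀ j, F j = F (j - 1) + g j) {N : ℤ}
    (hF0 : ∀ j ≤ N, F j = 0) (hg : (support g).Finite) :
    ∃ M, ∀ j ≥ M, F j = ∑ᶠ m, g m := by
  obtain ⟨B, hB⟩ := hg.bddAbove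
  refine ⟨max N B, fun j hj => ?_⟩
  have hsupp : support g ⊆ Finset.Ioc N j := fun m hm => by
    have hNm : N < m := not_le.1 fun h => hm (by
      have := hF m
      rw [hF0 m h, hF0 (m - 1) (by omega)] at this
      omega)
    simpa using ⟨hNm, (hB hm).trans ((le_max_right N B).trans hj)⟩
  have := sub_eq_sum_Ioc_of_cumulative hF ((le_max_left N B).trans hj)
  rw [hF0 N le_rfl, sub_zero] at this
  rw [this, finsum_eq_sum_of_support_subset g hsupp, Nat.cast_sum]

theorem mem_Icc_of_cumulative (hF : ∀ j, F j = F (j - 1) + g j) {N : ℤ}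
    (hF0 : ∀ j ≤ N, F j = 0) (hg : (support g).Finite) (j : ℤ) :
    F j ∈ Set.Icc 0 ((∑ᶠ m, g m : ℕ) : ℤ) := by
  obtain ⟨M, hM⟩ := exists_forall_ge_eq_finsum_of_cumulative hF hF0 hg
  have hmono := monotone_of_cumulative hF
  refine ⟨?_, ?_⟩
  · calc (0 : ℤ) = F (min j N) := (hF0 _ (min_le_right j N)).symm
      _ ≤ F j := hmono (min_le_left j N)
  · calc F j ≤ F (max j M) := hmono (le_max_left j M)
      _ = _ := hM _ (le_max_right j M)

theorem add_period_of_cumulative (hF : ∀ j, F j = F (j - 1) + g j) {n : ℤ} (hg : Periodic g n)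
    (j : ℤ) : F (j + n) = F j + (F n - F 0) := by
  have : Periodic (fun j => F (j + n) - F j) 1 := fun j => by
    have h₁ := hF (j + 1 + n)
    have h₂ := hF (j + 1)
    rw [show j + 1 + n - 1 = j + n by ring, show j + 1 + n = (j + 1) + n by ring, hg] at h₁
    simp only [add_sub_cancel_right] at h₂
    simp only
    omega
  have := this.int_mul j 0
  simp only [Int.cast_id, zero_add, mul_one] at this
  omega

theorem one_le_sum_Ioc_of_periodic {n : ℤ} (hn : 0 < n) (hg : Periodic g n) {j : ℤ}
    (hj : g j ≠ 0) : 1 ≤ ∑ m ∈ Finset.Ioc 0 n, g m := by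
  set j' := j - toIocDiv hn 0 j • n
  have hj' : j' ∈ Finset.Ioc 0 n := by
    rw [← Finset.mem_coe, Finset.coe_Ioc, ← zero_add n]
    exact sub_toIocDiv_zsmul_mem_Ioc hn 0 j
  calc 1 ≤ g j' := by rw [hg.sub_zsmul_eq]; omega
    _ ≤ _ := Finset.single_le_sum (fun _ _ => Nat.zero_le _) hj'

theorem ncard_block_of_cumulative (hF : ∀ j, F j = F (j - 1) + g j) (j : ℤ) :
    (block F j).ncard = g j := by
  rw [block, ← Finset.coe_Ioc, Set.ncard_coe_finset, Int.card_Ioc, hF j, add_sub_cancel_left,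
    Int.toNat_natCast]

end Cumulative

/-- Two fundamental domains of a translation-invariant set have the same size. -/
theorem ncard_setOf_mem_Ioc_eq {M : Type*} [AddCommGroup M] {S : Set M} {d : M} {r : ℤ}
    (hr : 0 < r) (hS : ∀ p (t : ℤ), p + t • d ∈ S ↔ p ∈ S) {f g : M → ℤ}
    (hf : ∀ p (t : ℤ), f (p + t • d) = f p + t • r)
    (hg : ∀ p (t : ℤ), g (p + t • d) = g p + t • r) :
    {p ∈ S | f p ∈ Set.Ioc 0 r}.ncard = {p ∈ S | g p ∈ Set.Ioc 0 r}.ncard := by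
  have hsub : ∀ (h : M → ℤ), (∀ p (t : ℤ), h (p + t • d) = h p + t • r) →
      ∀ p (t : ℤ), h (p - t • d) = h p - t • r := fun h hh p t => by
    simpa [sub_eq_add_neg] using hh p (-t)
  have hdiv : ∀ (h : M → ℤ), (∀ p (t : ℤ), h (p + t • d) = h p + t • r) →
      ∀ p (t : ℤ), h p ∈ Set.Ioc 0 r → toIocDiv hr 0 (h (p - t • d)) = -t := fun h hh p t hp =>
    toIocDiv_eq_of_sub_zsmul_mem_Ioc hr (by simpa [hsub h hh] using hp)
  have hmemS : ∀ p (t : ℤ), p - t • d ∈ S ↔ p ∈ S := fun p t => by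
    simpa [sub_eq_add_neg] using hS p (-t)
  refine Set.ncard_congr (fun p _ => p - toIocDiv hr 0 (g p) • d) ?_ ?_ ?_
  · rintro p ⟨hpS, -⟩
    refine ⟨(hmemS p _).2 hpS, ?_⟩
    simpa [hsub g hg] using sub_toIocDiv_zsmul_mem_Ioc hr 0 (g p)
  · rintro p q ⟨-, hp⟩ ⟨-, hq⟩ hpq
    have := congrArg (fun x => toIocDiv hr 0 (f x)) hpq
    simp only [hdiv f hf p _ hp, hdiv f hf q _ hq, neg_inj] at this
    rwa [this, sub_left_inj] at hpq
  · rintro q ⟨hqS, hq⟩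
    refine ⟨q - toIocDiv hr 0 (f q) • d, ⟨(hmemS q _).2 hqS, ?_⟩, ?_⟩
    · simpa [hsub f hf] using sub_toIocDiv_zsmul_mem_Ioc hr 0 (f q)
    · simp only [hdiv g hg q _ hq, neg_smul, sub_neg_eq_add, sub_add_cancel]

/-- `affLen` normalises an inversion by its left position; this normalises it by its smaller
value, which is how the double sum counts it. -/
def inversionsByValue (r : ℕ) (u : ℤ ≃ ℤ) : Set (ℤ × ℤ) :=
  {p | p.1 < p.2 ∧ u p.2 < u p.1 ∧ u p.2 ∈ Set.Ioc 0 (r : ℤ)}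

section InversionsByValue

variable {r : ℕ} {u : ℤ ≃ ℤ}

theorem affLen_eq_ncard_inversionsByValue (hr : 0 < r) (hu : PeriodicPerm r u) :
    affLen r u = (inversionsByValue r u).ncard := by
  have key := ncard_setOf_mem_Ioc_eq (S := {p : ℤ × ℤ | p.1 < p.2 ∧ u p.2 < u p.1})
    (d := ((r : ℤ), (r : ℤ))) (r := r) (by exact_mod_cast hr) (f := Prod.fst)
    (g := fun p => u p.2)
    (fun p t => by simp only [Set.mem_ofPred_eq, Prod.fst_add, Prod.snd_add, Prod.smul_mk,
      hu.apply_add_zsmul, add_lt_add_iff_right])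
    (fun p t => rfl) (fun p t => hu.apply_add_zsmul p.2 t)
  unfold affLen inversionsByValue
  convert key using 2 <;> ext p <;> simp only [Set.mem_ofPred_eq, Set.mem_Ioc] <;> omega

theorem inversionsByValue_finite (hr : 0 < r) (hu : PeriodicPerm r u) :
    (inversionsByValue r u).Finite := by
  obtain ⟨B, hB⟩ := hu.exists_abs_sub_le_s10 hr
  refine ((Set.finite_Icc (1 - B) (r + B)).prod (Set.finite_Icc (1 - B) (r + B))).subset ?_
  rintro ⟨x, y⟩ ⟨hxy, huyx, huy₁, huy₂⟩
  have hx := abs_le.1 (hB x)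
  have hy := abs_le.1 (hB y)
  simp only [Set.mem_prod, Set.mem_Icc] at *
  omega

end InversionsByValue

noncomputable def inversionSum (n : ℕ) (A : ℤ → ℤ → ℕ) : ℕ :=
  ∑ᶠ (i : ℤ) (_ : 1 ≤ i ∧ i ≤ (n : ℤ)) (k : ℤ) (_ : i < k) (j : ℤ) (l : ℤ) (_ : l < j),
    A i j * A k l

theorem inversionSum_eq_finsum_ite (n : ℕ) (A : ℤ → ℤ → ℕ) :
    inversionSum n A = ∑ᶠ (i : ℤ) (k : ℤ) (j : ℤ) (l : ℤ),
      if (1 ≤ i ∧ i ≤ (n : ℤ)) ∧ i < k ∧ l < j then A i j * A k l else 0 := by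
  classical
  unfold inversionSum
  refine finsum_congr fun i => ?_
  by_cases hi : 1 ≤ i ∧ i ≤ (n : ℤ)
  · rw [finsum_eq_if, if_pos hi]
    refine finsum_congr fun k => ?_
    by_cases hk : i < k <;> simp [hi, hk, finsum_eq_if]
  · simp [hi]

theorem ncard_eq_finsum_ncard_inter_preimage {α β : Type*} {S : Set α} (hS : S.Finite)
    (f : α → β) : S.ncard = ∑ᶠ b, (S ∩ f ⁻¹' {b}).ncard := by
  classical
  have hsupp : support (fun b => (S ∩ f ⁻¹' {b}).ncard) ⊆ hS.toFinset.image f := fun b hb => by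
    obtain ⟨a, ha, rfl⟩ := Set.nonempty_of_ncard_ne_zero hb
    simpa using ⟨a, ha, rfl⟩
  rw [finsum_eq_sum_of_support_subset _ hsupp, Set.ncard_eq_toFinset_card S hS,
    Finset.card_eq_sum_card_image f]
  refine Finset.sum_congr rfl fun b _ => ?_
  rw [← Set.ncard_coe_finset]
  congr 1
  ext a
  simp

def crossingPairs {α : Type*} (row col : α → ℤ) (n : ℕ) : Set (α × α) :=
  {p | col p.1 < col p.2 ∧ row p.2 < row p.1 ∧ 1 ≤ row p.2 ∧ row p.2 ≤ (n : ℤ)}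

theorem ncard_crossingPairs {α : Type*} {row col : α → ℤ} {n : ℕ} {A : ℤ → ℤ → ℕ}
    (hcell : ∀ k l, {x | row x = k ∧ col x = l}.ncard = A k l)
    (hfin : (crossingPairs row col n).Finite) :
    (crossingPairs row col n).ncard = inversionSum n A := by
  classical
  set X := crossingPairs row col n
  have hfiber : ∀ i k j l, (X ∩ (fun p => row p.2) ⁻¹' {i} ∩ (fun p => row p.1) ⁻¹' {k}
      ∩ (fun p => col p.2) ⁻¹' {j} ∩ (fun p => col p.1) ⁻¹' {l}).ncard
      = if (1 ≤ i ∧ i ≤ (n : ℤ)) ∧ i < k ∧ l < j then A i j * A k l else 0 := by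
    intro i k j l
    split_ifs with h
    · rw [← hcell, ← hcell, mul_comm, ← Set.ncard_prod]
      congr 1
      ext ⟨x, y⟩
      simp only [X, crossingPairs, Set.mem_inter_iff, Set.mem_preimage, Set.mem_singleton_iff,
        Set.mem_ofPred_eq, Set.mem_prod]
      constructor
      · rintro ⟨⟨⟨⟨-, rfl⟩, rfl⟩, rfl⟩, rfl⟩
        exact ⟨⟨rfl, rfl⟩, rfl, rfl⟩
      · rintro ⟨⟨rfl, rfl⟩, rfl, rfl⟩
        exact ⟨⟨⟨⟨⟨h.2.2, h.2.1, h.1⟩, rfl⟩, rfl⟩, rfl⟩, rfl⟩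
    · refine (congrArg Set.ncard (Set.eq_empty_of_forall_notMem ?_)).trans (Set.ncard_empty _)
      rintro ⟨x, y⟩ ⟨⟨⟨⟨⟨hcol, hrow, hpos, hle⟩, rfl⟩, rfl⟩, rfl⟩, rfl⟩
      exact h ⟨⟨hpos, hle⟩, hrow, hcol⟩
  rw [inversionSum_eq_finsum_ite, ncard_eq_finsum_ncard_inter_preimage hfin fun p => row p.2]
  refine finsum_congr fun i => ?_
  rw [ncard_eq_finsum_ncard_inter_preimage (hfin.inter_of_left _) fun p => row p.1]
  refine finsum_congr fun k => ?_
  rw [ncard_eq_finsum_ncard_inter_preimage ((hfin.inter_of_left _).inter_of_left _)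
    fun p => col p.2]
  refine finsum_congr fun j => ?_
  rw [ncard_eq_finsum_ncard_inter_preimage
    (((hfin.inter_of_left _).inter_of_left _).inter_of_left _) fun p => col p.1]
  exact finsum_congr fun l => hfiber i k j l

section Counting

variable {n r : ℕ} {A : ℤ → ℤ → ℕ} {cl cm R C : ℤ → ℤ} {u : ℤ ≃ ℤ}

theorem ncard_crossingPairs_comp (hcl : Monotone cl) (hcm : Monotone cm)
    (hR : ∀ z, z ∈ block cl (R z)) (hC : ∀ z, z ∈ block cm (C z))
    (hmat : ∀ k l, (block cl k ∩ u '' block cm l).ncard = A k l)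
    (hfin : (crossingPairs (R ∘ u) C n).Finite) :
    (crossingPairs (R ∘ u) C n).ncard = inversionSum n A := by
  refine ncard_crossingPairs (fun k l => ?_) hfin
  have hcell : {x | (R ∘ u) x = k ∧ C x = l} = block cm l ∩ u ⁻¹' block cl k := by
    ext x
    simp only [comp_apply, Set.mem_ofPred_eq, Set.mem_inter_iff, Set.mem_preimage]
    constructor
    · rintro ⟨rfl, rfl⟩
      exact ⟨hC x, hR (u x)⟩
    · rintro ⟨hx, hux⟩
      exact ⟨eq_of_mem_block hcl (hR _) hux, eq_of_mem_block hcm (hC x) hx⟩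
  rw [hcell, ← Set.ncard_image_of_injective _ u.injective, Set.image_inter_preimage,
    Set.inter_comm, hmat]

theorem crossingPairs_subset_inversionsByValue (hcl : Monotone cl) (hcm : Monotone cm)
    (hR : ∀ z, z ∈ block cl (R z)) (hC : ∀ z, z ∈ block cm (C z))
    (hcl0 : cl 0 = 0) (hcln : cl n = r) :
    crossingPairs (R ∘ u) C n ⊆ inversionsByValue r u := by
  rintro ⟨x, y⟩ ⟨hCxy, hRyx, hRy₁, hRy₂⟩
  refine ⟨lt_of_mem_block hcm (hC x) (hC y) hCxy, lt_of_mem_block hcl (hR _) (hR _) hRyx, ?_⟩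
  have := (mem_Ioc_iff_of_mem_block hcl (hR (u y)) (a := 0) (b := n)).2
    ⟨hRy₁, hRy₂⟩
  rwa [hcl0, hcln] at this

theorem inversionsByValue_subset_crossingPairs (hcl : Monotone cl) (hcm : Monotone cm)
    (hR : ∀ z, z ∈ block cl (R z)) (hC : ∀ z, z ∈ block cm (C z))
    (hcl0 : cl 0 = 0) (hcln : cl n = r)
    (hcolMono : ∀ j, StrictMonoOn u (block cm j))
    (hrowMono : ∀ i, StrictMonoOn u.symm (block cl i)) :
    inversionsByValue r u ⊆ crossingPairs (R ∘ u) C n := by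
  rintro ⟨x, y⟩ ⟨hxy, huyx, huy⟩
  have hC_ne : C x ≠ C y := fun h =>
    (hcolMono (C y) (h ▸ hC x) (hC y) hxy).not_gt huyx
  have hR_ne : R (u y) ≠ R (u x) := fun h => by
    have := hrowMono (R (u x)) (h ▸ hR (u y)) (hR (u x)) huyx
    simp only [Equiv.symm_apply_apply] at this
    exact this.not_gt hxy
  have hRy := (mem_Ioc_iff_of_mem_block hcl (hR (u y)) (a := 0) (b := n)).1
    (by rwa [hcl0, hcln])
  exact ⟨(le_of_mem_block hcm (hC x) (hC y) hxy.le).lt_of_ne hC_ne,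
    (le_of_mem_block hcl (hR _) (hR _) huyx.le).lt_of_ne hR_ne, hRy.1, hRy.2⟩

theorem inversionSum_le_affLen (hr : 0 < r) (hu : PeriodicPerm r u)
    (hcl : Monotone cl) (hcm : Monotone cm)
    (hR : ∀ z, z ∈ block cl (R z)) (hC : ∀ z, z ∈ block cm (C z))
    (hcl0 : cl 0 = 0) (hcln : cl n = r)
    (hmat : ∀ k l, (block cl k ∩ u '' block cm l).ncard = A k l) :
    inversionSum n A ≤ affLen r u := by
  have hsub := crossingPairs_subset_inversionsByValue hcl hcm hR hC hcl0 hcln (u := u)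
  have hfin := inversionsByValue_finite hr hu
  rw [affLen_eq_ncard_inversionsByValue hr hu,
    ← ncard_crossingPairs_comp hcl hcm hR hC hmat (hfin.subset hsub)]
  exact Set.ncard_le_ncard hsub hfin

theorem affLen_eq_inversionSum (hr : 0 < r) (hu : PeriodicPerm r u)
    (hcl : Monotone cl) (hcm : Monotone cm)
    (hR : ∀ z, z ∈ block cl (R z)) (hC : ∀ z, z ∈ block cm (C z))
    (hcl0 : cl 0 = 0) (hcln : cl n = r)
    (hmat : ∀ k l, (block cl k ∩ u '' block cm l).ncard = A k l)
    (hcolMono : ∀ j, StrictMonoOn u (block cm j))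
    (hrowMono : ∀ i, StrictMonoOn u.symm (block cl i)) :
    affLen r u = inversionSum n A := by
  have hX : crossingPairs (R ∘ u) C n = inversionsByValue r u :=
    (crossingPairs_subset_inversionsByValue hcl hcm hR hC hcl0 hcln).antisymm
      (inversionsByValue_subset_crossingPairs hcl hcm hR hC hcl0 hcln hcolMono hrowMono)
  rw [affLen_eq_ncard_inversionsByValue hr hu, ← hX,
    ncard_crossingPairs_comp hcl hcm hR hC hmat (hX ▸ inversionsByValue_finite hr hu)]

end Counting

/-- `ty` cuts column block `j` of positions into consecutive pieces `block (Q j) i` and row block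
`i` of values into consecutive pieces `block (P i) j`, and translates the piece `(i, j)` of
positions onto the piece `(i, j)` of values; this is the reading-word representative `ỹ_A`. -/
structure IsBlockTranspose (cl cm : ℤ → ℤ) (P Q : ℤ → ℤ → ℤ) (ty : ℤ ≃ ℤ) : Prop where
  monotone_cl : Monotone cl
  monotone_cm : Monotone cm
  monotone_P : ∀ i, Monotone (P i)
  monotone_Q : ∀ j, Monotone (Q j)
  block_P_subset : ∀ i j, block (P i) j ⊆ block cl i
  block_Q_subset : ∀ i j, block (Q j) i ⊆ block cm j
  exists_mem_block_Q : ∀ x, ∃ i j, x ∈ block (Q j) i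
  sub_eq : ∀ i j, Q j i - Q j (i - 1) = P i j - P i (j - 1)
  apply_eq : ∀ i j x, x ∈ block (Q j) i → ty x = x - Q j (i - 1) + P i (j - 1)

namespace IsBlockTranspose

variable {cl cm : ℤ → ℤ} {P Q : ℤ → ℤ → ℤ} {ty : ℤ ≃ ℤ} {i j x : ℤ}

theorem apply_mem_block (h : IsBlockTranspose cl cm P Q ty) (hx : x ∈ block (Q j) i) :
    ty x ∈ block (P i) j := by
  have := h.sub_eq i j
  rw [h.apply_eq i j x hx]
  exact ⟨by linarith [hx.1], by linarith [hx.2]⟩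

theorem image_block (h : IsBlockTranspose cl cm P Q ty) (i j : ℤ) :
    ty '' block (Q j) i = block (P i) j := by
  refine Set.Subset.antisymm (Set.image_subset_iff.2 fun x hx => h.apply_mem_block hx)
    fun z hz => ?_
  have := h.sub_eq i j
  have hx : z - P i (j - 1) + Q j (i - 1) ∈ block (Q j) i :=
    ⟨by linarith [hz.1], by linarith [hz.2]⟩
  exact ⟨_, hx, by rw [h.apply_eq i j _ hx]; ring⟩

theorem block_inter_image_block (h : IsBlockTranspose cl cm P Q ty) (k l : ℤ) :
    block cl k ∩ ty '' block cm l = block (P k) l := by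
  refine Set.Subset.antisymm ?_ fun z hz => ⟨h.block_P_subset k l hz, ?_⟩
  · rintro _ ⟨hk, x, hx, rfl⟩
    obtain ⟨i, j, hij⟩ := h.exists_mem_block_Q x
    obtain rfl := eq_of_mem_block h.monotone_cm (h.block_Q_subset i j hij) hx
    have hP := h.apply_mem_block hij
    obtain rfl := eq_of_mem_block h.monotone_cl (h.block_P_subset i j hP) hk
    exact hP
  · rw [← h.image_block] at hz
    exact Set.image_mono (h.block_Q_subset k l) hz

theorem strictMonoOn_block (h : IsBlockTranspose cl cm P Q ty) (j : ℤ) :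
    StrictMonoOn ty (block cm j) := by
  intro x hx y hy hxy
  obtain ⟨i₁, j₁, hx₁⟩ := h.exists_mem_block_Q x
  obtain ⟨i₂, j₂, hy₂⟩ := h.exists_mem_block_Q y
  obtain rfl := eq_of_mem_block h.monotone_cm (h.block_Q_subset _ _ hx₁) hx
  obtain rfl := eq_of_mem_block h.monotone_cm (h.block_Q_subset _ _ hy₂) hy
  rcases (le_of_mem_block (h.monotone_Q _) hx₁ hy₂ hxy.le).lt_or_eq with hi | rfl
  · exact lt_of_mem_block h.monotone_cl (h.block_P_subset _ _ (h.apply_mem_block hx₁))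
      (h.block_P_subset _ _ (h.apply_mem_block hy₂)) hi
  · rw [h.apply_eq _ _ x hx₁, h.apply_eq _ _ y hy₂]
    omega

theorem strictMonoOn_symm_block (h : IsBlockTranspose cl cm P Q ty) (i : ℤ) :
    StrictMonoOn ty.symm (block cl i) := by
  intro a ha b hb hab
  obtain ⟨i₁, j₁, hx⟩ := h.exists_mem_block_Q (ty.symm a)
  obtain ⟨i₂, j₂, hy⟩ := h.exists_mem_block_Q (ty.symm b)
  have hxa := h.apply_mem_block hx
  have hyb := h.apply_mem_block hy
  rw [Equiv.apply_symm_apply] at hxa hyb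
  obtain rfl := eq_of_mem_block h.monotone_cl (h.block_P_subset _ _ hxa) ha
  obtain rfl := eq_of_mem_block h.monotone_cl (h.block_P_subset _ _ hyb) hb
  refine lt_of_not_ge fun hyx => ?_
  rcases (le_of_mem_block h.monotone_cm (h.block_Q_subset _ _ hy) (h.block_Q_subset _ _ hx)
    hyx).lt_or_eq with hj | rfl
  · exact (lt_of_mem_block (h.monotone_P _) hyb hxa hj).not_gt hab
  · have hxa' := h.apply_eq _ _ _ hx
    have hyb' := h.apply_eq _ _ _ hy
    rw [Equiv.apply_symm_apply] at hxa' hyb'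
    omega

end IsBlockTranspose

section Matrix

variable {n : ℕ} {A : ℤ → ℤ → ℕ}

theorem periodic_rowSum (hA : ∀ i j : ℤ, A (i + n) (j + n) = A i j) :
    Periodic (fun i => ∑ᶠ j, A i j) n := fun i => by
  simp only [← finsum_comp_equiv (Equiv.addRight (n : ℤ)) (f := A (i + n)),
    Equiv.coe_addRight, hA]

theorem periodic_colSum (hA : ∀ i j : ℤ, A (i + n) (j + n) = A i j) :
    Periodic (fun j => ∑ᶠ i, A i j) n := fun j => by
  simp only [← finsum_comp_equiv (Equiv.addRight (n : ℤ)) (f := fun i => A i (j + n)),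
    Equiv.coe_addRight, hA]

theorem exists_colSum_ne_zero (hcol : ∀ j : ℤ, (support fun i => A i j).Finite) {s : Finset ℤ}
    (hs : ∑ i ∈ s, ∑ᶠ j, A i j ≠ 0) : ∃ j, ∑ᶠ i, A i j ≠ 0 := by
  obtain ⟨i, -, hi⟩ := Finset.exists_ne_zero_of_sum_ne_zero hs
  obtain ⟨j, hj⟩ := not_forall.1 fun h => hi (finsum_eq_zero_of_forall_eq_zero h)
  exact ⟨j, (Nat.pos_of_ne_zero hj).trans_le
    (single_le_finsum i (hcol j) fun _ => Nat.zero_le _) |>.ne'⟩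

end Matrix

theorem isBlockTranspose_of_partialSums {A : ℤ → ℤ → ℕ}
    (hrow : ∀ i : ℤ, (support (A i)).Finite) (hcol : ∀ j : ℤ, (support fun i => A i j).Finite)
    {cl cm : ℤ → ℤ} (hcl : ∀ i : ℤ, cl i = cl (i - 1) + ∑ᶠ j : ℤ, A i j)
    (hcm : ∀ j : ℤ, cm j = cm (j - 1) + ∑ᶠ i : ℤ, A i j) (hcm_cover : ∀ z, ∃ j, z ∈ block cm j)
    {p : ℤ → ℤ → ℤ} (hp : ∀ i j : ℤ, p i j = p i (j - 1) + A i j)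
    (hp0 : ∀ i : ℤ, ∃ N : ℤ, ∀ j ≤ N, p i j = 0)
    {q : ℤ → ℤ → ℤ} (hq : ∀ j i : ℤ, q j i = q j (i - 1) + A i j)
    (hq0 : ∀ j : ℤ, ∃ N : ℤ, ∀ i ≤ N, q j i = 0) {ty : ℤ ≃ ℤ}
    (htydef : ∀ i j x : ℤ, cm (j - 1) + q j (i - 1) < x → x ≤ cm (j - 1) + q j i →
      ty x = x - (cm (j - 1) + q j (i - 1)) + (cl (i - 1) + p i (j - 1))) :
    IsBlockTranspose cl cm (fun i j => cl (i - 1) + p i j) (fun j i => cm (j - 1) + q j i) ty where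
  monotone_cl := monotone_of_cumulative hcl
  monotone_cm := monotone_of_cumulative hcm
  monotone_P i := (monotone_of_cumulative (hp i)).const_add _
  monotone_Q j := (monotone_of_cumulative (hq j)).const_add _
  block_P_subset i j := by
    obtain ⟨N, hN⟩ := hp0 i
    have hbd := mem_Icc_of_cumulative (hp i) hN (hrow i)
    exact Set.Ioc_subset_Ioc (by linarith [(hbd (j - 1)).1]) (by linarith [(hbd j).2, hcl i])
  block_Q_subset i j := by
    obtain ⟨N, hN⟩ := hq0 j
    have hbd := mem_Icc_of_cumulative (hq j) hN (hcol j)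
    exact Set.Ioc_subset_Ioc (by linarith [(hbd (i - 1)).1]) (by linarith [(hbd i).2, hcm j])
  exists_mem_block_Q x := by
    obtain ⟨j, hj⟩ := hcm_cover x
    obtain ⟨N, hN⟩ := hq0 j
    obtain ⟨M, hM⟩ := exists_forall_ge_eq_finsum_of_cumulative (hq j) hN (hcol j)
    obtain ⟨i, hi⟩ := exists_mem_block ((monotone_of_cumulative (hq j)).const_add (cm (j - 1)))
      (a := N) (b := M) (z := x) (by linarith [hN N le_rfl, hj.1])
      (by linarith [hM M le_rfl, hj.2, hcm j])
    exact ⟨i, j, hi⟩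
  sub_eq i j := by linarith [hp i j, hq j i]
  apply_eq i j x hx := htydef i j x hx.1 hx.2

end AffineDoubleCoset

open AffineDoubleCoset in
theorem stmt10_general (n r : ℕ) (hn : 1 ≤ n) (hr : 1 ≤ r)
    (A : ℤ → ℤ → ℕ)
    (hAper : ∀ i j : ℤ, A (i + n) (j + n) = A i j)
    (hrow : ∀ i : ℤ, (Function.support (A i)).Finite)
    (hcol : ∀ j : ℤ, (Function.support (fun i => A i j)).Finite)
    (htot : ∑ i ∈ Finset.Icc (1 : ℤ) (n : ℤ), ∑ᶠ j : ℤ, A i j = r)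
    (cl cm : ℤ → ℤ)
    (hcl0 : cl 0 = 0) (hcl : ∀ i : ℤ, cl i = cl (i - 1) + ∑ᶠ j : ℤ, A i j)
    (hcm : ∀ j : ℤ, cm j = cm (j - 1) + ∑ᶠ i : ℤ, A i j)
    (p : ℤ → ℤ → ℤ)
    (hp : ∀ i j : ℤ, p i j = p i (j - 1) + A i j)
    (hp0 : ∀ i : ℤ, ∃ N : ℤ, ∀ j ≤ N, p i j = 0)
    (q : ℤ → ℤ → ℤ)
    (hq : ∀ j i : ℤ, q j i = q j (i - 1) + A i j)
    (hq0 : ∀ j : ℤ, ∃ N : ℤ, ∀ i ≤ N, q j i = 0)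
    (ty : ℤ ≃ ℤ) (hty : PeriodicPerm r ty)
    (htydef : ∀ i j x : ℤ, cm (j - 1) + q j (i - 1) < x → x ≤ cm (j - 1) + q j i →
      ty x = x - (cm (j - 1) + q j (i - 1)) + (cl (i - 1) + p i (j - 1)))
    (w : ℤ ≃ ℤ) (hw : PeriodicPerm r w)
    (hwmat : ∀ k l : ℤ,
      (Set.Ioc (cl (k - 1)) (cl k) ∩ (⇑w '' Set.Ioc (cm (l - 1)) (cm l))).ncard = A k l) :
    (∑ᶠ (i : ℤ) (_ : 1 ≤ i ∧ i ≤ (n : ℤ)) (k : ℤ) (_ : i < k)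
        (j : ℤ) (l : ℤ) (_ : l < j), A i j * A k l) ≤ affLen r w
    ∧ affLen r ty
        = ∑ᶠ (i : ℤ) (_ : 1 ≤ i ∧ i ≤ (n : ℤ)) (k : ℤ) (_ : i < k)
            (j : ℤ) (l : ℤ) (_ : l < j), A i j * A k l := by
  have hcl_mono := monotone_of_cumulative hcl
  have hcm_mono := monotone_of_cumulative hcm
  have hcln : cl n = r := by
    have hIoc : Finset.Ioc (0 : ℤ) n = Finset.Icc (1 : ℤ) n := by ext; simp; omega
    have := sub_eq_sum_Ioc_of_cumulative hcl (Nat.cast_nonneg n)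
    rw [hIoc, hcl0, sub_zero] at this
    rw [this]
    exact_mod_cast htot
  have hcm_pos : 0 < cm n - cm 0 := by
    obtain ⟨j, hj⟩ := exists_colSum_ne_zero hcol (s := Finset.Icc (1 : ℤ) n) (by omega)
    rw [sub_eq_sum_Ioc_of_cumulative hcm (Nat.cast_nonneg n)]
    exact_mod_cast one_le_sum_Ioc_of_periodic (by omega) (periodic_colSum hAper) hj
  choose R hR using exists_mem_block_of_add_period hcl_mono
    (add_period_of_cumulative hcl (periodic_rowSum hAper)) (by omega)
  choose C hC using exists_mem_block_of_add_period hcm_mono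
    (add_period_of_cumulative hcm (periodic_colSum hAper)) hcm_pos
  have htr := isBlockTranspose_of_partialSums hrow hcol hcl hcm (fun z => ⟨C z, hC z⟩)
    hp hp0 hq hq0 htydef
  have htymat : ∀ k l, (block cl k ∩ ty '' block cm l).ncard = A k l := fun k l => by
    rw [htr.block_inter_image_block]
    exact ncard_block_of_cumulative (fun j => by rw [hp k j]; ring) l
  exact ⟨inversionSum_le_affLen (by omega) hw hcl_mono hcm_mono hR hC hcl0 hcln hwmat,
    affLen_eq_inversionSum (by omega) hty hcl_mono hcm_mono hR hC hcl0 hcln htymat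
      htr.strictMonoOn_block htr.strictMonoOn_symm_block⟩

/-- With `A` an `n`-periodic ℕ-matrix of total sum `r` encoding
a double coset (blocks given by the cumulative sums `cl`, `cm`), every element
`w` of the double coset (i.e. with matrix `A`) satisfies
`ℓ(w) ≥ Σ_{1≤i≤n, i<k, j>l} a_{ij} a_{kl}`, and equality holds for the
reading-word representative `ty = ỹ_A` (characterized via the partial sums
`p`, `q` as the segment-by-segment translation). -/
theorem stmt10 (n r : ℕ) (hn : 1 ≤ n) (hr : 1 ≤ r)
    (A : ℤ → ℤ → ℕ)
    (hAper : ∀ i j : ℤ, A (i + n) (j + n) = A i j)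
    (hrow : ∀ i : ℤ, (Function.support (A i)).Finite)
    (hcol : ∀ j : ℤ, (Function.support (fun i => A i j)).Finite)
    (htot : ∑ i ∈ Finset.Icc (1 : ℤ) (n : ℤ), ∑ᶠ j : ℤ, A i j = r)
    (cl cm : ℤ → ℤ)
    (hcl0 : cl 0 = 0) (hcl : ∀ i : ℤ, cl i = cl (i - 1) + ∑ᶠ j : ℤ, A i j)
    (hcm0 : cm 0 = 0) (hcm : ∀ j : ℤ, cm j = cm (j - 1) + ∑ᶠ i : ℤ, A i j)
    (p : ℤ → ℤ → ℤ)
    (hp : ∀ i j : ℤ, p i j = p i (j - 1) + A i j)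
    (hp0 : ∀ i : ℤ, ∃ N : ℤ, ∀ j ≤ N, p i j = 0)
    (q : ℤ → ℤ → ℤ)
    (hq : ∀ j i : ℤ, q j i = q j (i - 1) + A i j)
    (hq0 : ∀ j : ℤ, ∃ N : ℤ, ∀ i ≤ N, q j i = 0)
    (ty : ℤ ≃ ℤ) (hty : PeriodicPerm r ty)
    (htydef : ∀ i j x : ℤ, cm (j - 1) + q j (i - 1) < x → x ≤ cm (j - 1) + q j i →
      ty x = x - (cm (j - 1) + q j (i - 1)) + (cl (i - 1) + p i (j - 1)))
    (w : ℤ ≃ ℤ) (hw : PeriodicPerm r w)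
    (hwmat : ∀ k l : ℤ,
      (Set.Ioc (cl (k - 1)) (cl k) ∩ (⇑w '' Set.Ioc (cm (l - 1)) (cm l))).ncard = A k l) :
    (∑ᶠ (i : ℤ) (_ : 1 ≤ i ∧ i ≤ (n : ℤ)) (k : ℤ) (_ : i < k)
        (j : ℤ) (l : ℤ) (_ : l < j), A i j * A k l) ≤ affLen r w
    ∧ affLen r ty
        = ∑ᶠ (i : ℤ) (_ : 1 ≤ i ∧ i ≤ (n : ℤ)) (k : ℤ) (_ : i < k)
            (j : ℤ) (l : ℤ) (_ : l < j), A i j * A k l :=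
  stmt10_general n r hn hr A hAper hrow hcol htot cl cm hcl0 hcl hcm p hp hp0 q hq hq0 ty hty htydef
    w hw hwmat
end

section
/- Let μ ∈ Λ(n,r) and β ∈ ℕ^n with β ≤ μ componentwise, and set α_i = μ_{i+1} − β_{i+1} for 0 ≤ i ≤ n−1 (indices mod n). Let δ = (α₀, β₁, α₁, β₂, ..., α_{n−1}, β_n) as a composition of r, and let X_i = {μ_{0,i}+1, ..., μ_{0,i}+α_i} where μ_{0,i} = μ₁+⋯+μ_i. Then the map sending w to (w⁻¹X₀, ..., w⁻¹X_{n−1}) is a bijection from the set of minimal length right-coset representatives of 𝔖_δ inside 𝔖_μ onto the set of tuples (Y₀,...,Y_{n−1}) with Y_i ⊆ R_{i+1}^μ and |Y_i| = α_i. -/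
/-!
If `w ∈ 𝔖_μ` and `w⁻¹` is increasing on the blocks of `δ`, then on the `μ`-block `R_{i+1}`
the map `w⁻¹` sends `X_i` increasingly onto `Y_i = w⁻¹ X_i` and the rest of the block
increasingly onto `R_{i+1} \ Y_i`. Increasing bijections between finite linearly ordered sets
are unique, so `w` is determined by the `Y_i`; conversely, for any choice of the `Y_i` these
increasing bijections glue to a permutation.
-/

open Finset Function
open Set (MapsTo EqOn BijOn)

namespace Finset

variable {α : Type*} [LinearOrder α] {s t : Finset α} {f g : α → α}

theorem eqOn_of_strictMonoOn_of_mapsTo (h : #s = #t) (hf : StrictMonoOn f s)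
    (hg : StrictMonoOn g s) (hft : MapsTo f s t) (hgt : MapsTo g s t) : EqOn f g s := by
  have hmem (i : Fin #s) : s.orderEmbOfFin rfl i ∈ s := orderEmbOfFin_mem _ _ _
  have hunique {f : α → α} (hf : StrictMonoOn f s) (hft : MapsTo f s t) :
      (fun i => f (s.orderEmbOfFin rfl i)) = t.orderEmbOfFin h.symm :=
    orderEmbOfFin_unique _ (fun i => hft (hmem i))
      fun i j hij => hf (hmem i) (hmem j) ((s.orderEmbOfFin rfl).strictMono hij)
  intro x hx
  obtain ⟨i, rfl⟩ : x ∈ Set.range (s.orderEmbOfFin rfl) := by rwa [range_orderEmbOfFin]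
  exact congrFun ((hunique hf hft).trans (hunique hg hgt).symm) i

/-- The increasing bijection `s → t`, extended by the identity off `s` (and the identity
everywhere when `#s ≠ #t`). -/
noncomputable def monoMap (s t : Finset α) (x : α) : α :=
  if hx : x ∈ s ∧ #s = #t then t.orderEmbOfFin hx.2.symm ((s.orderIsoOfFin rfl).symm ⟨x, hx.1⟩)
  else x

theorem mapsTo_monoMap (h : #s = #t) : MapsTo (monoMap s t) s t := by
  intro x hx
  rw [monoMap, dif_pos ⟨mem_coe.1 hx, h⟩]
  exact orderEmbOfFin_mem t h.symm _

theorem strictMonoOn_monoMap (h : #s = #t) : StrictMonoOn (monoMap s t) s := by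
  intro x hx y hy hxy
  simp only [monoMap, dif_pos (And.intro (mem_coe.1 hx) h), dif_pos (And.intro (mem_coe.1 hy) h)]
  exact (t.orderEmbOfFin h.symm).strictMono ((s.orderIsoOfFin rfl).symm.strictMono hxy)

theorem eqOn_monoMap (h : #s = #t) (hf : StrictMonoOn f s) (hft : MapsTo f s t) :
    EqOn f (monoMap s t) s :=
  eqOn_of_strictMonoOn_of_mapsTo h hf (strictMonoOn_monoMap h) hft (mapsTo_monoMap h)

theorem monoMap_monoMap (h : #s = #t) {x : α} (hx : x ∈ s) :
    monoMap t s (monoMap s t x) = x :=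
  eqOn_of_strictMonoOn_of_mapsTo rfl
    ((strictMonoOn_monoMap h.symm).comp (strictMonoOn_monoMap h) (mapsTo_monoMap h))
    strictMonoOn_id ((mapsTo_monoMap h.symm).comp (mapsTo_monoMap h)) (Set.mapsTo_id _) hx

theorem image_monoMap (h : #s = #t) : s.image (monoMap s t) = t :=
  eq_of_subset_of_card_le (image_subset_iff.2 (mapsTo_monoMap h))
    (by rw [card_image_of_injOn (strictMonoOn_monoMap h).injOn, h])

end Finset

section Piecewise

variable {ι α : Type*} [LinearOrder α] {S T : ι → Finset α}

open Classical in
noncomputable def piecewiseMonoMap (S T : ι → Finset α) (x : α) : α :=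
  if h : ∃ k, x ∈ S k then monoMap (S h.choose) (T h.choose) x else x

theorem piecewiseMonoMap_of_mem (hS : Pairwise (Disjoint on S)) {k : ι} {x : α}
    (hx : x ∈ S k) : piecewiseMonoMap S T x = monoMap (S k) (T k) x := by
  have h : ∃ k, x ∈ S k := ⟨k, hx⟩
  obtain rfl : h.choose = k := hS.eq (not_disjoint_iff.2 ⟨x, h.choose_spec, hx⟩)
  simp only [piecewiseMonoMap, dif_pos h]

theorem piecewiseMonoMap_of_forall_notMem {x : α} (hx : ∀ k, x ∉ S k) :
    piecewiseMonoMap S T x = x := by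
  simp [piecewiseMonoMap, hx]

theorem mapsTo_piecewiseMonoMap (hS : Pairwise (Disjoint on S))
    (hcard : ∀ k, #(S k) = #(T k)) (k : ι) : MapsTo (piecewiseMonoMap S T) (S k) (T k) :=
  fun _ hx => piecewiseMonoMap_of_mem hS hx ▸ mapsTo_monoMap (hcard k) hx

theorem strictMonoOn_piecewiseMonoMap (hS : Pairwise (Disjoint on S))
    (hcard : ∀ k, #(S k) = #(T k)) (k : ι) : StrictMonoOn (piecewiseMonoMap S T) (S k) :=
  (strictMonoOn_monoMap (hcard k)).congr fun _ hx => (piecewiseMonoMap_of_mem hS hx).symm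

theorem image_piecewiseMonoMap (hS : Pairwise (Disjoint on S))
    (hcard : ∀ k, #(S k) = #(T k)) (k : ι) : (S k).image (piecewiseMonoMap S T) = T k := by
  rw [Finset.image_congr fun _ hx => piecewiseMonoMap_of_mem hS hx, image_monoMap (hcard k)]

theorem eq_piecewiseMonoMap (hS : Pairwise (Disjoint on S))
    (hcard : ∀ k, #(S k) = #(T k)) {f : α → α} (hf : ∀ k, StrictMonoOn f (S k))
    (hft : ∀ k, MapsTo f (S k) (T k)) (hfix : ∀ x, (∀ k, x ∉ S k) → f x = x) :
    f = piecewiseMonoMap S T := by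
  funext x
  by_cases hx : ∃ k, x ∈ S k
  · obtain ⟨k, hx⟩ := hx
    rw [piecewiseMonoMap_of_mem hS hx]
    exact eqOn_monoMap (hcard k) (hf k) (hft k) hx
  · rw [hfix x (not_exists.1 hx), piecewiseMonoMap_of_forall_notMem (not_exists.1 hx)]

theorem piecewiseMonoMap_leftInverse (hS : Pairwise (Disjoint on S))
    (hcard : ∀ k, #(S k) = #(T k)) (hT : Pairwise (Disjoint on T))
    (hunion : ∀ x, (∃ k, x ∈ S k) ↔ ∃ k, x ∈ T k) :
    LeftInverse (piecewiseMonoMap T S) (piecewiseMonoMap S T) := by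
  intro x
  by_cases hx : ∃ k, x ∈ S k
  · obtain ⟨k, hx⟩ := hx
    rw [piecewiseMonoMap_of_mem hT (mapsTo_piecewiseMonoMap hS hcard k hx),
      piecewiseMonoMap_of_mem hS hx, monoMap_monoMap (hcard k) hx]
  · have hx' : ∀ k, x ∉ T k := not_exists.1 ((hunion x).not.1 hx)
    rw [piecewiseMonoMap_of_forall_notMem (not_exists.1 hx),
      piecewiseMonoMap_of_forall_notMem hx']

noncomputable def piecewiseMonoPerm (hS : Pairwise (Disjoint on S))
    (hcard : ∀ k, #(S k) = #(T k)) (hT : Pairwise (Disjoint on T))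
    (hunion : ∀ x, (∃ k, x ∈ S k) ↔ ∃ k, x ∈ T k) : Equiv.Perm α where
  toFun := piecewiseMonoMap S T
  invFun := piecewiseMonoMap T S
  left_inv := piecewiseMonoMap_leftInverse hS hcard hT hunion
  right_inv := piecewiseMonoMap_leftInverse hT (fun k => (hcard k).symm) hS fun x => (hunion x).symm

end Piecewise

section Blocks

variable {κ α : Type*} [DecidableEq α] {B X Y : κ → Finset α}

/-- When `B` lists the blocks of `μ`, `blockPieces B X` lists the blocks of `δ`. -/
def blockPieces (B Y : κ → Finset α) : κ ⊕ κ → Finset α :=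
  Sum.elim Y fun k => B k \ Y k

theorem pairwise_disjoint_blockPieces (hB : Pairwise (Disjoint on B)) (hY : ∀ k, Y k ⊆ B k) :
    Pairwise (Disjoint on blockPieces B Y) := by
  rintro (i | i) (j | j) hij <;> simp only [onFun, blockPieces, Sum.elim_inl, Sum.elim_inr]
  · exact (hB fun h => hij (congrArg _ h)).mono (hY i) (hY j)
  · obtain rfl | h := eq_or_ne i j
    · exact disjoint_sdiff
    · exact (hB h).mono (hY i) sdiff_subset
  · obtain rfl | h := eq_or_ne i j
    · exact sdiff_disjoint
    · exact (hB h).mono sdiff_subset (hY j)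
  · exact (hB fun h => hij (congrArg _ h)).mono sdiff_subset sdiff_subset

theorem exists_mem_blockPieces_iff (hY : ∀ k, Y k ⊆ B k) {x : α} :
    (∃ j, x ∈ blockPieces B Y j) ↔ ∃ k, x ∈ B k := by
  simp only [blockPieces, Sum.exists, Sum.elim_inl, Sum.elim_inr, ← exists_or]
  refine exists_congr fun k => ⟨?_, fun hx => ?_⟩
  · rintro (hx | hx)
    exacts [hY k hx, (mem_sdiff.1 hx).1]
  · by_cases hxY : x ∈ Y k
    exacts [Or.inl hxY, Or.inr (mem_sdiff.2 ⟨hx, hxY⟩)]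

theorem card_blockPieces (hX : ∀ k, X k ⊆ B k) (hY : ∀ k, Y k ⊆ B k)
    (hcard : ∀ k, #(X k) = #(Y k)) (j : κ ⊕ κ) :
    #(blockPieces B X j) = #(blockPieces B Y j) := by
  rcases j with k | k
  · exact hcard k
  · simp only [blockPieces, Sum.elim_inr, card_sdiff_of_subset (hX k),
      card_sdiff_of_subset (hY k), hcard k]

end Blocks

theorem Equiv.Perm.mapsTo_inv_of_image_eq {α : Type*} {w : Equiv.Perm α} {s : Set α}
    (h : w '' s = s) : MapsTo ⇑w⁻¹ s s := by
  rintro _ hx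
  rw [← h] at hx
  obtain ⟨y, hy, rfl⟩ := hx
  simpa using hy

theorem Equiv.Perm.image_eq_of_mapsTo_inv {α : Type*} {w : Equiv.Perm α} {s : Finset α}
    (h : MapsTo ⇑w⁻¹ s s) : ⇑w '' s = s := by
  have hinv : ⇑w⁻¹ '' s = s :=
    (s.finite_toSet.injOn_iff_bijOn_of_mapsTo h).1 (w⁻¹.injective.injOn) |>.image_eq
  conv_lhs => rw [← hinv]
  simp [Set.image_image]

section MinimalCosetReps

variable {κ α : Type*} [LinearOrder α] {B X : κ → Finset α}

theorem inv_eq_piecewiseMonoMap (hB : Pairwise (Disjoint on B)) (hX : ∀ k, X k ⊆ B k)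
    {w : Equiv.Perm α} (hfix : ∀ x, (∀ k, x ∉ B k) → w x = x) (hblock : ∀ k, ⇑w '' B k = B k)
    (hmono : ∀ k, StrictMonoOn ⇑w⁻¹ (X k)) (hmono' : ∀ k, StrictMonoOn ⇑w⁻¹ ↑(B k \ X k)) :
    ⇑w⁻¹ = piecewiseMonoMap (blockPieces B X) (blockPieces B fun k => (X k).image ⇑w⁻¹) := by
  have hY (k : κ) : (X k).image ⇑w⁻¹ ⊆ B k :=
    image_subset_iff.2 fun x hx => (w.mapsTo_inv_of_image_eq (hblock k)) (hX k hx)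
  refine eq_piecewiseMonoMap (pairwise_disjoint_blockPieces hB hX)
    (card_blockPieces hX hY fun k => (card_image_of_injective _ w⁻¹.injective).symm)
    (by rintro (k | k); exacts [hmono k, hmono' k]) ?_ fun x hx => ?_
  · rintro (k | k) x hx
    · exact mem_image_of_mem _ hx
    obtain ⟨hxB, hxX⟩ := mem_sdiff.1 hx
    refine mem_sdiff.2 ⟨w.mapsTo_inv_of_image_eq (hblock k) hxB, fun hxY => hxX ?_⟩
    obtain ⟨y, hy, hyx⟩ := mem_image.1 hxY
    rwa [← w⁻¹.injective hyx]
  · have hxB : ∀ k, x ∉ B k :=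
      not_exists.1 ((exists_mem_blockPieces_iff hX).not.1 (not_exists.2 hx))
    exact Equiv.Perm.inv_eq_iff_eq.2 (hfix x hxB).symm

theorem exists_perm_image_inv_eq (hB : Pairwise (Disjoint on B)) (hX : ∀ k, X k ⊆ B k)
    {Y : κ → Finset α} (hY : ∀ k, Y k ⊆ B k) (hcard : ∀ k, #(X k) = #(Y k)) :
    ∃ w : Equiv.Perm α, (∀ x, (∀ k, x ∉ B k) → w x = x) ∧ (∀ k, ⇑w '' B k = B k) ∧
      (∀ k, StrictMonoOn ⇑w⁻¹ (X k)) ∧ (∀ k, StrictMonoOn ⇑w⁻¹ ↑(B k \ X k)) ∧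
      ∀ k, (X k).image ⇑w⁻¹ = Y k := by
  have hS := pairwise_disjoint_blockPieces hB hX
  have hcard' := card_blockPieces hX hY hcard
  let v := piecewiseMonoPerm hS hcard' (pairwise_disjoint_blockPieces hB hY) fun x =>
    (exists_mem_blockPieces_iff hX).trans (exists_mem_blockPieces_iff hY).symm
  have hv : ⇑v = piecewiseMonoMap (blockPieces B X) (blockPieces B Y) := rfl
  refine ⟨v⁻¹, fun x hx => ?_, fun k => ?_, fun k => ?_, fun k => ?_, fun k => ?_⟩
  · rw [Equiv.Perm.inv_eq_iff_eq, hv, piecewiseMonoMap_of_forall_notMem]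
    exact not_exists.1 ((exists_mem_blockPieces_iff hX).not.2 (not_exists.2 hx))
  · refine Equiv.Perm.image_eq_of_mapsTo_inv fun x hx => ?_
    simp only [inv_inv, hv]
    by_cases hxX : x ∈ X k
    · exact hY k (mapsTo_piecewiseMonoMap hS hcard' (Sum.inl k) hxX)
    · exact (mem_sdiff.1 (mapsTo_piecewiseMonoMap hS hcard' (Sum.inr k)
        (mem_sdiff.2 ⟨hx, hxX⟩))).1
  · exact inv_inv v ▸ strictMonoOn_piecewiseMonoMap hS hcard' (Sum.inl k)
  · exact inv_inv v ▸ strictMonoOn_piecewiseMonoMap hS hcard' (Sum.inr k)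
  · exact inv_inv v ▸ image_piecewiseMonoMap hS hcard' (Sum.inl k)

theorem bijOn_image_inv_minLengthCosetReps {ι α : Type*} [LinearOrder α] (I : Set ι)
    [DecidablePred (· ∈ I)] {B X : ι → Finset α} (hB : I.PairwiseDisjoint B)
    (hX : ∀ k ∈ I, X k ⊆ B k) :
    BijOn (fun (w : Equiv.Perm α) k => if k ∈ I then (X k).image ⇑w⁻¹ else ∅)
      {w | (∀ x, (∀ k ∈ I, x ∉ B k) → w x = x) ∧ (∀ k ∈ I, ⇑w '' ↑(B k) = ↑(B k)) ∧
        (∀ k ∈ I, StrictMonoOn ⇑w⁻¹ ↑(X k)) ∧ (∀ k ∈ I, StrictMonoOn ⇑w⁻¹ ↑(B k \ X k))}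
      {Y | (∀ k ∈ I, Y k ⊆ B k ∧ #(Y k) = #(X k)) ∧ ∀ k ∉ I, Y k = ∅} := by
  have hB' : Pairwise (Disjoint on fun k : I => B k) := Set.Pairwise.subtype I _ hB
  have hX' (k : I) : X k ⊆ B k := hX k k.2
  refine ⟨?_, ?_, ?_⟩
  · rintro w ⟨-, hblock, -, -⟩
    refine ⟨fun k hk => ?_, fun k hk => if_neg hk⟩
    simp only [if_pos hk]
    exact ⟨image_subset_iff.2 fun x hx => w.mapsTo_inv_of_image_eq (hblock k hk) (hX k hk hx),
      card_image_of_injective _ w⁻¹.injective⟩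
  · rintro w ⟨hfix, hblock, hmono, hmono'⟩ w' ⟨hfix', hblock', hmono₁', hmono₂'⟩ heq
    have hw := inv_eq_piecewiseMonoMap hB' hX' (fun x hx => hfix x fun k hk => hx ⟨k, hk⟩)
      (fun k => hblock k k.2) (fun k => hmono k k.2) fun k => hmono' k k.2
    have hw' := inv_eq_piecewiseMonoMap hB' hX' (fun x hx => hfix' x fun k hk => hx ⟨k, hk⟩)
      (fun k => hblock' k k.2) (fun k => hmono₁' k k.2) fun k => hmono₂' k k.2
    have himage : (fun k : I => (X k).image ⇑w⁻¹) = fun k : I => (X k).image ⇑w'⁻¹ :=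
      funext fun k => by simpa [k.2] using congrFun heq k
    refine inv_injective (DFunLike.coe_injective ?_)
    rw [hw, hw', himage]
  · rintro Y ⟨hY, hYout⟩
    obtain ⟨w, hfix, hblock, hmono, hmono', himage⟩ := exists_perm_image_inv_eq hB' hX'
      (Y := fun k => Y k) (fun k => (hY k k.2).1) fun k => (hY k k.2).2.symm
    refine ⟨w, ⟨fun x hx => hfix x fun k => hx k k.2, fun k hk => hblock ⟨k, hk⟩,
      fun k hk => hmono ⟨k, hk⟩, fun k hk => hmono' ⟨k, hk⟩⟩, funext fun k => ?_⟩
    dsimp only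
    split_ifs with hk
    exacts [himage ⟨k, hk⟩, (hYout k hk).symm]

end MinimalCosetReps

theorem stmt13_general (n r : ℕ) (μ β : ℕ → ℕ)
    (hsum : ∑ i ∈ Finset.range n, μ i = r)
    (M : ℕ → ℕ) (hM : ∀ i, M i = ∑ j ∈ Finset.range i, μ j) :
    Set.BijOn
      (fun (w : Equiv.Perm ℕ) (i : ℕ) =>
        if i < n then (Finset.Ioc (M i) (M i + (μ i - β i))).image ⇑w⁻¹ else ∅)
      {w : Equiv.Perm ℕ |
        (∀ x : ℕ, x = 0 ∨ r < x → w x = x) ∧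
        (∀ i < n, ⇑w '' ↑(Finset.Ioc (M i) (M (i + 1)))
            = ↑(Finset.Ioc (M i) (M (i + 1)))) ∧
        (∀ i < n, StrictMonoOn (⇑w⁻¹)
            ↑(Finset.Ioc (M i) (M i + (μ i - β i)))) ∧
        (∀ i < n, StrictMonoOn (⇑w⁻¹)
            ↑(Finset.Ioc (M i + (μ i - β i)) (M (i + 1))))}
      {Y : ℕ → Finset ℕ |
        (∀ i < n, Y i ⊆ Finset.Ioc (M i) (M (i + 1)) ∧ (Y i).card = μ i - β i) ∧
        ∀ i, n ≤ i → Y i = ∅} := by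
  have hstep (i : ℕ) : M (i + 1) = M i + μ i := by rw [hM, hM, sum_range_succ]
  have hmono : Monotone M := monotone_nat_of_le_succ fun i => by rw [hstep]; omega
  have hB : Pairwise (Disjoint on fun i => Ioc (M i) (M (i + 1))) := fun i j hij => by
    simpa [← disjoint_coe, Order.succ_eq_add_one] using hmono.pairwise_disjoint_on_Ioc_succ hij
  have hcover (x : ℕ) : (∃ i < n, x ∈ Ioc (M i) (M (i + 1))) ↔ x ∈ Ioc 0 r := by
    have := congrArg (x ∈ ·) (hmono.biUnion_Ico_Ioc_map_succ 0 n)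
    simpa [hM 0, ← hsum, ← hM n, and_left_comm] using this
  have hout (x : ℕ) : (x = 0 ∨ r < x) ↔ ∀ i < n, x ∉ Ioc (M i) (M (i + 1)) := by
    have := (hcover x).not
    push Not at this
    rw [this, mem_Ioc]
    omega
  have hsdiff (i : ℕ) : Ioc (M i) (M (i + 1)) \ Ioc (M i) (M i + (μ i - β i)) =
      Ioc (M i + (μ i - β i)) (M (i + 1)) := by
    ext x; simp only [mem_sdiff, mem_Ioc, hstep]; omega
  simpa only [Set.mem_Iio, hout, hsdiff, Nat.card_Ioc, add_tsub_cancel_left, not_lt] using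
    bijOn_image_inv_minLengthCosetReps (Set.Iio n) (hB.set_pairwise _)
      (X := fun i => Ioc (M i) (M i + (μ i - β i)))
      fun i _ => Ioc_subset_Ioc_right (by rw [hstep]; omega)

/-- Let `μ ∈ Λ(n,r)` with cumulative sums `M`, `β ≤ μ`
componentwise, and `α_i = μ_i − β_i` (0-indexed). With `δ` the composition
`(α₀, β₁, α₁, β₂, …, α_{n−1}, β_n)` refining `μ`, and
`X_i = {M_i+1, …, M_i+α_i}` the initial segment of the block
`R_{i+1}^μ = {M_i+1, …, M_{i+1}}`, the map `w ↦ (w⁻¹X₀, …, w⁻¹X_{n−1})` is a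
bijection from the set of minimal-length right coset representatives of
`𝔖_δ` inside `𝔖_μ` (i.e. `w ∈ 𝔖_μ` with `w⁻¹` increasing on each δ-block)
onto the set of tuples `(Y₀,…,Y_{n−1})` with `Y_i ⊆ R_{i+1}^μ` and
`|Y_i| = α_i`. Permutations are realized in `Equiv.Perm ℕ`, fixing `0` and
everything above `r`. -/
theorem stmt13 (n r : ℕ) (hn : 1 ≤ n) (hr : 1 ≤ r)
    (μ β : ℕ → ℕ) (hβ : ∀ i < n, β i ≤ μ i)
    (hsum : ∑ i ∈ Finset.range n, μ i = r)
    (M : ℕ → ℕ) (hM : ∀ i, M i = ∑ j ∈ Finset.range i, μ j) :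
    Set.BijOn
      (fun (w : Equiv.Perm ℕ) (i : ℕ) =>
        if i < n then (Finset.Ioc (M i) (M i + (μ i - β i))).image ⇑w⁻¹ else ∅)
      {w : Equiv.Perm ℕ |
        (∀ x : ℕ, x = 0 ∨ r < x → w x = x) ∧
        (∀ i < n, ⇑w '' ↑(Finset.Ioc (M i) (M (i + 1)))
            = ↑(Finset.Ioc (M i) (M (i + 1)))) ∧
        (∀ i < n, StrictMonoOn (⇑w⁻¹)
            ↑(Finset.Ioc (M i) (M i + (μ i - β i)))) ∧
        (∀ i < n, StrictMonoOn (⇑w⁻¹)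
            ↑(Finset.Ioc (M i + (μ i - β i)) (M (i + 1))))}
      {Y : ℕ → Finset ℕ |
        (∀ i < n, Y i ⊆ Finset.Ioc (M i) (M (i + 1)) ∧ (Y i).card = μ i - β i) ∧
        ∀ i, n ≤ i → Y i = ∅} :=
  stmt13_general n r μ β hsum M hM
end
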